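/- arXiv:1411.4382 — 10 statements merged into one kernel-verified Lean document; each statement's English description precedes it below -/
import Mathlib

section
/- Let E be a real finite-dimensional Euclidean space, f : E → ℝ ∪ {+∞} a proper extended real-valued function, and x̄ ∈ dom f. If x̄ is an isolated local minimizer of second order for f, then f⁻(x̄;u) ≥ 0 for all u ∈ E and f⁻²(x̄;0;u) > 0 for all u ∈ E with u ≠ 0. -/
open Filter Topology

/-- The lower Hadamard directional derivative
`f⁻(x;u) = liminf_{t↓0, u'→u} (f(x+tu') − f(x))/t`, with values in `EReal`. -/
noncomputable def hadamardD1 {E : Type*} [NormedAddCommGroup E] [InnerProductSpace ℝ E]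
    (f : E → EReal) (x u : E) : EReal :=
  Filter.liminf
    (fun p : ℝ × E => (((p.1)⁻¹ : ℝ) : EReal) * (f (x + p.1 • p.2) - f x))
    ((𝓝[>] (0 : ℝ)) ×ˢ 𝓝 u)

/-- The lower Hadamard subdifferential
`∂⁻f(x) = {x* continuous linear | x*(u) ≤ f⁻(x;u) for all u}`. -/
def hadamardSubdiff {E : Type*} [NormedAddCommGroup E] [InnerProductSpace ℝ E]
    (f : E → EReal) (x : E) : Set (E →L[ℝ] ℝ) :=
  {xs | ∀ u : E, ((xs u : ℝ) : EReal) ≤ hadamardD1 f x u}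

/-- The lower second-order Hadamard derivative relative to `x₁ ∈ ∂⁻f(x)`:
`f⁻²(x;x₁;u) = liminf_{t↓0, u'→u} 2(f(x+tu') − f(x) − t·x₁(u'))/t²`. -/
noncomputable def hadamardD2 {E : Type*} [NormedAddCommGroup E] [InnerProductSpace ℝ E]
    (f : E → EReal) (x : E) (x₁ : E →L[ℝ] ℝ) (u : E) : EReal :=
  Filter.liminf
    (fun p : ℝ × E =>
      ((2 / p.1 ^ 2 : ℝ) : EReal) * (f (x + p.1 • p.2) - f x - ((p.1 * x₁ p.2 : ℝ) : EReal)))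
    ((𝓝[>] (0 : ℝ)) ×ˢ 𝓝 u)

/-- `x̄` is an isolated local minimizer of second order for `f`: there are a
neighborhood `N` of `x̄` and a constant `C > 0` with
`f(x) > f(x̄) + C‖x−x̄‖²` for all `x ∈ N`, `x ≠ x̄`. -/
def IsolatedLocalMinOrder2 {E : Type*} [NormedAddCommGroup E] [InnerProductSpace ℝ E]
    (f : E → EReal) (x₀ : E) : Prop :=
  ∃ C : ℝ, 0 < C ∧ ∃ N ∈ 𝓝 x₀, ∀ x ∈ N, x ≠ x₀ →
    f x₀ + ((C * ‖x - x₀‖ ^ 2 : ℝ) : EReal) < f x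

/-
At an isolated local minimizer of second order, `f x - f x̄ ≥ C‖x - x̄‖²` near `x̄`. Along
`x = x̄ + t u'` this bounds the first-order quotient below by `0` and the second-order quotient
(with `x₁ = 0`) below by `2C‖u'‖²`, which tends to `2C‖u‖² > 0` as `u' → u`.
-/

section

variable {E : Type*} [NormedAddCommGroup E] [InnerProductSpace ℝ E]

lemma IsolatedLocalMinOrder2.eventually_sq_le_sub {f : E → EReal} {x₀ : E}
    (hmin : IsolatedLocalMinOrder2 f x₀) (hbot : f x₀ ≠ ⊥) (htop : f x₀ ≠ ⊤) :
    ∃ C : ℝ, 0 < C ∧ ∀ᶠ x in 𝓝 x₀, ((C * ‖x - x₀‖ ^ 2 : ℝ) : EReal) ≤ f x - f x₀ := by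
  obtain ⟨C, hC, N, hN, hlt⟩ := hmin
  refine ⟨C, hC, Filter.mem_of_superset hN fun x hx => ?_⟩
  rw [Set.mem_ofPred_eq, EReal.le_sub_iff_add_le (.inl hbot) (.inl htop), add_comm]
  rcases eq_or_ne x x₀ with rfl | hne
  · simp
  · exact (hlt x hx hne).le

lemma tendsto_add_smul_nhdsGT_prod_nhds (x u : E) :
    Tendsto (fun p : ℝ × E => x + p.1 • p.2) ((𝓝[>] (0 : ℝ)) ×ˢ 𝓝 u) (𝓝 x) := by
  have hcont : Continuous fun p : ℝ × E => x + p.1 • p.2 := by fun_prop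
  simpa using (hcont.tendsto (0, u)).mono_left
    (Filter.prod_mono_left _ nhdsWithin_le_nhds |>.trans_eq nhds_prod_eq.symm)

lemma hadamardD1_nonneg {f : E → EReal} {x : E} (h : ∀ᶠ y in 𝓝 x, 0 ≤ f y - f x) (u : E) :
    0 ≤ hadamardD1 f x u := by
  refine le_liminf_of_le (by isBoundedDefault) ?_
  filter_upwards [(tendsto_add_smul_nhdsGT_prod_nhds x u).eventually h,
    prod_mem_prod self_mem_nhdsWithin univ_mem] with p hp hmem
  exact EReal.mul_nonneg (EReal.coe_nonneg.2 (inv_nonneg.2 (le_of_lt hmem.1))) hp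

lemma le_hadamardD2_zero {f : E → EReal} {x : E} {C : ℝ}
    (h : ∀ᶠ y in 𝓝 x, ((C * ‖y - x‖ ^ 2 : ℝ) : EReal) ≤ f y - f x) (u : E) :
    ((2 * C * ‖u‖ ^ 2 : ℝ) : EReal) ≤ hadamardD2 f x 0 u := by
  have hquot : ∀ᶠ p : ℝ × E in (𝓝[>] (0 : ℝ)) ×ˢ 𝓝 u,
      ((2 * C * ‖p.2‖ ^ 2 : ℝ) : EReal) ≤ ((2 / p.1 ^ 2 : ℝ) : EReal) *
        (f (x + p.1 • p.2) - f x - ((p.1 * (0 : E →L[ℝ] ℝ) p.2 : ℝ) : EReal)) := by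
    filter_upwards [(tendsto_add_smul_nhdsGT_prod_nhds x u).eventually h,
      prod_mem_prod self_mem_nhdsWithin univ_mem] with p hp hmem
    have ht : 0 < p.1 := hmem.1
    rw [add_sub_cancel_left, norm_smul, Real.norm_eq_abs, abs_of_pos ht] at hp
    have hscale : 2 * C * ‖p.2‖ ^ 2 = 2 / p.1 ^ 2 * (C * (p.1 * ‖p.2‖) ^ 2) := by
      field_simp
    simp only [zero_apply, mul_zero, EReal.coe_zero, sub_zero]
    rw [hscale, EReal.coe_mul]
    exact mul_le_mul_of_nonneg_left hp (EReal.coe_nonneg.2 (by positivity))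
  have hlim : Tendsto (fun p : ℝ × E => ((2 * C * ‖p.2‖ ^ 2 : ℝ) : EReal))
      ((𝓝[>] (0 : ℝ)) ×ˢ 𝓝 u) (𝓝 ((2 * C * ‖u‖ ^ 2 : ℝ) : EReal)) := by
    refine continuous_coe_real_ereal.continuousAt.tendsto.comp ?_
    exact ((continuous_const.mul (continuous_norm.pow 2)).tendsto u).comp tendsto_snd
  calc ((2 * C * ‖u‖ ^ 2 : ℝ) : EReal)
      = liminf (fun p : ℝ × E => ((2 * C * ‖p.2‖ ^ 2 : ℝ) : EReal)) ((𝓝[>] 0) ×ˢ 𝓝 u) :=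
        hlim.liminf_eq.symm
    _ ≤ hadamardD2 f x 0 u := liminf_le_liminf hquot

end

theorem isolated_local_min_order2_necessary_general
    {E : Type*} [NormedAddCommGroup E] [InnerProductSpace ℝ E]
    (f : E → EReal) (hproper : (∀ x, f x ≠ ⊥) ∧ ∃ x, f x ≠ ⊤)
    (x₀ : E) (hdom : f x₀ ≠ ⊤)
    (hmin : IsolatedLocalMinOrder2 f x₀) :
    (∀ u : E, 0 ≤ hadamardD1 f x₀ u) ∧
      ∀ u : E, u ≠ 0 → 0 < hadamardD2 f x₀ 0 u := by
  obtain ⟨C, hC, hgrowth⟩ := hmin.eventually_sq_le_sub (hproper.1 x₀) hdom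
  have hnonneg : ∀ᶠ x in 𝓝 x₀, 0 ≤ f x - f x₀ := hgrowth.mono fun x hx =>
    (EReal.coe_nonneg.2 (by positivity)).trans hx
  refine ⟨hadamardD1_nonneg hnonneg, fun u hu => ?_⟩
  have hpos : (0 : ℝ) < 2 * C * ‖u‖ ^ 2 := by positivity
  exact (EReal.coe_pos.2 hpos).trans_le (le_hadamardD2_zero hgrowth u)

/-- If `x̄ ∈ dom f` is an isolated local minimizer of second order
for the proper extended real-valued function `f`, then `f⁻(x̄;u) ≥ 0` for all `u`
and `f⁻²(x̄;0;u) > 0` for all `u ≠ 0`. -/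
theorem isolated_local_min_order2_necessary
    {E : Type*} [NormedAddCommGroup E] [InnerProductSpace ℝ E] [FiniteDimensional ℝ E]
    (f : E → EReal) (hproper : (∀ x, f x ≠ ⊥) ∧ ∃ x, f x ≠ ⊤)
    (x₀ : E) (hdom : f x₀ ≠ ⊤)
    (hmin : IsolatedLocalMinOrder2 f x₀) :
    (∀ u : E, 0 ≤ hadamardD1 f x₀ u) ∧
      ∀ u : E, u ≠ 0 → 0 < hadamardD2 f x₀ 0 u :=
  isolated_local_min_order2_necessary_general f hproper x₀ hdom hmin
end

section
/- Let E be a real finite-dimensional Euclidean space, f : E → ℝ ∪ {+∞} a proper extended real-valued function, and x̄ ∈ dom f. Suppose f⁻(x̄;u) ≥ 0 for all u ∈ E, and that for every u ≠ 0 with f⁻(x̄;u) = 0 one has f⁻²(x̄;0;u) > 0. Then x̄ is an isolated local minimizer of second order for f. -/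
open Filter Topology

/-!
If `x₀` is not an isolated local minimizer of second order, there are points `xₙ → x₀`,
`xₙ ≠ x₀`, with `f xₙ ≤ f x₀ + Cₙ ‖xₙ - x₀‖²` and `Cₙ → 0`. Writing `xₙ = x₀ + tₙ uₙ` with
`tₙ = ‖xₙ - x₀‖` and `‖uₙ‖ = 1`, compactness of the unit sphere gives a subsequence with
`uₙ → v ≠ 0`. Along it the first-order quotients are at most `Cₙ tₙ → 0` and the second-order
ones at most `2 Cₙ → 0`, so `f⁻(x₀;v) = 0` and `f⁻²(x₀;0;v) ≤ 0`, contradicting the hypotheses.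
-/

theorem liminf_le_of_tendsto_of_eventually_le {α ι β : Type*} [CompleteLinearOrder β]
    [TopologicalSpace β] [OrderTopology β] {Q : α → β} {F : Filter α} {l : Filter ι} [l.NeBot]
    {p : ι → α} {g : ι → β} {b : β} (hp : Tendsto p l F) (hQ : ∀ᶠ i in l, Q (p i) ≤ g i)
    (hg : Tendsto g l (𝓝 b)) : liminf Q F ≤ b :=
  calc liminf Q F ≤ liminf (Q ∘ p) l := hp.liminf_le_liminf_comp
    _ ≤ liminf g l := liminf_le_liminf hQ
    _ = b := hg.liminf_eq

-- No finiteness is needed: `EReal` subtraction sends `⊤ - ⊤` and `⊥ - ⊥` to `⊥`.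
theorem EReal.coe_mul_sub_le_of_le_add {s c : ℝ} (hs : 0 ≤ s) {a b : EReal}
    (h : a ≤ b + (c : EReal)) : (s : EReal) * (a - b) ≤ ((s * c : ℝ) : EReal) := by
  rw [EReal.coe_mul]
  exact mul_le_mul_of_nonneg_left (EReal.sub_le_of_le_add' h) (EReal.coe_nonneg.2 hs)

section HadamardBounds

variable {E : Type*} [NormedAddCommGroup E] [InnerProductSpace ℝ E] {f : E → EReal}
  {x₀ v : E} {t C : ℕ → ℝ} {u : ℕ → E}

theorem hadamardD1_nonpos_of_tendsto (ht : Tendsto t atTop (𝓝[>] 0))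
    (hu : Tendsto u atTop (𝓝 v)) (hC : Tendsto C atTop (𝓝 0))
    (hf : ∀ n, f (x₀ + t n • u n) ≤ f x₀ + ((C n * t n ^ 2 : ℝ) : EReal)) :
    hadamardD1 f x₀ v ≤ 0 := by
  have hCt : Tendsto (fun n => ((C n * t n : ℝ) : EReal)) atTop (𝓝 0) := by
    simpa using (EReal.tendsto_coe.2 (hC.mul (tendsto_nhds_of_tendsto_nhdsWithin ht)))
  refine liminf_le_of_tendsto_of_eventually_le (ht.prodMk hu) ?_ hCt
  filter_upwards [ht self_mem_nhdsWithin] with n (hn : 0 < t n)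
  convert EReal.coe_mul_sub_le_of_le_add (inv_nonneg.2 hn.le) (hf n) using 2
  field_simp

theorem hadamardD2_zero_nonpos_of_tendsto (ht : Tendsto t atTop (𝓝[>] 0))
    (hu : Tendsto u atTop (𝓝 v)) (hC : Tendsto C atTop (𝓝 0))
    (hf : ∀ n, f (x₀ + t n • u n) ≤ f x₀ + ((C n * t n ^ 2 : ℝ) : EReal)) :
    hadamardD2 f x₀ 0 v ≤ 0 := by
  have h2C : Tendsto (fun n => ((2 * C n : ℝ) : EReal)) atTop (𝓝 0) := by
    simpa using (EReal.tendsto_coe.2 (hC.const_mul 2))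
  refine liminf_le_of_tendsto_of_eventually_le (ht.prodMk hu) ?_ h2C
  filter_upwards [ht self_mem_nhdsWithin] with n (hn : 0 < t n)
  simp only [zero_apply, mul_zero, EReal.coe_zero, sub_zero]
  convert EReal.coe_mul_sub_le_of_le_add (by positivity : 0 ≤ 2 / t n ^ 2) (hf n) using 2
  field_simp

end HadamardBounds

theorem exists_subseq_tendsto_normalized_sub {E : Type*} [NormedAddCommGroup E]
    [NormedSpace ℝ E] [ProperSpace E] {x : ℕ → E} {x₀ : E} (hx : Tendsto x atTop (𝓝 x₀))
    (hne : ∀ n, x n ≠ x₀) :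
    ∃ v : E, v ≠ 0 ∧ ∃ φ : ℕ → ℕ, StrictMono φ ∧
      Tendsto (fun n => ‖x (φ n) - x₀‖) atTop (𝓝[>] 0) ∧
      Tendsto (fun n => ‖x (φ n) - x₀‖⁻¹ • (x (φ n) - x₀)) atTop (𝓝 v) := by
  have hpos : ∀ n, 0 < ‖x n - x₀‖ := fun n => norm_pos_iff.2 (sub_ne_zero.2 (hne n))
  have hsphere : ∀ n, ‖x n - x₀‖⁻¹ • (x n - x₀) ∈ Metric.sphere (0 : E) 1 := fun n => by
    rw [mem_sphere_zero_iff_norm, norm_smul, norm_inv, norm_norm, inv_mul_cancel₀ (hpos n).ne']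
  obtain ⟨v, hv, φ, hφ, hu⟩ := (isCompact_sphere (0 : E) 1).tendsto_subseq hsphere
  refine ⟨v, ne_zero_of_mem_unit_sphere ⟨v, hv⟩, φ, hφ, ?_, hu⟩
  have ht : Tendsto (fun n => ‖x n - x₀‖) atTop (𝓝 0) := by
    simpa using (hx.sub_const x₀).norm
  exact tendsto_nhdsWithin_of_tendsto_nhds_of_eventually_within _
    (ht.comp hφ.tendsto_atTop) (Eventually.of_forall fun n => hpos (φ n))

theorem exists_seq_of_not_isolatedLocalMinOrder2 {E : Type*} [NormedAddCommGroup E]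
    [InnerProductSpace ℝ E] {f : E → EReal} {x₀ : E} (h : ¬ IsolatedLocalMinOrder2 f x₀) :
    ∃ x : ℕ → E, Tendsto x atTop (𝓝 x₀) ∧ (∀ n, x n ≠ x₀) ∧ ∃ C : ℕ → ℝ,
      Tendsto C atTop (𝓝 0) ∧ ∀ n, f (x n) ≤ f x₀ + ((C n * ‖x n - x₀‖ ^ 2 : ℝ) : EReal) := by
  simp only [IsolatedLocalMinOrder2, not_exists, not_and, not_forall, not_lt] at h
  have hε : ∀ n : ℕ, 0 < ((n : ℝ) + 1)⁻¹ := fun n => by positivity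
  choose x hx hne hfx using fun n : ℕ =>
    h _ (hε n) (Metric.ball x₀ _) (Metric.ball_mem_nhds _ (hε n))
  have hε0 : Tendsto (fun n : ℕ => ((n : ℝ) + 1)⁻¹) atTop (𝓝 0) := by
    simpa only [one_div] using tendsto_one_div_add_atTop_nhds_zero_nat (𝕜 := ℝ)
  refine ⟨x, ?_, hne, _, hε0, hfx⟩
  exact tendsto_iff_dist_tendsto_zero.2 <|
    squeeze_zero (fun _ => dist_nonneg) (fun n => (hx n).le) hε0

theorem isolated_local_min_order2_sufficient_general
    {E : Type*} [NormedAddCommGroup E] [InnerProductSpace ℝ E] [FiniteDimensional ℝ E]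
    (f : E → EReal)
    (x₀ : E)
    (h1 : ∀ u : E, 0 ≤ hadamardD1 f x₀ u)
    (h2 : ∀ u : E, u ≠ 0 → hadamardD1 f x₀ u = 0 → 0 < hadamardD2 f x₀ 0 u) :
    IsolatedLocalMinOrder2 f x₀ := by
  by_contra hmin
  obtain ⟨x, hx, hne, C, hC, hfx⟩ := exists_seq_of_not_isolatedLocalMinOrder2 hmin
  obtain ⟨v, hv, φ, hφ, ht, hu⟩ := exists_subseq_tendsto_normalized_sub hx hne
  have hf : ∀ n, f (x₀ + ‖x (φ n) - x₀‖ • ‖x (φ n) - x₀‖⁻¹ • (x (φ n) - x₀)) ≤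
      f x₀ + ((C (φ n) * ‖x (φ n) - x₀‖ ^ 2 : ℝ) : EReal) := fun n => by
    rw [smul_inv_smul₀ (norm_ne_zero_iff.2 (sub_ne_zero.2 (hne (φ n)))), add_sub_cancel]
    exact hfx (φ n)
  have hCφ := hC.comp hφ.tendsto_atTop
  have hD1 : hadamardD1 f x₀ v = 0 :=
    le_antisymm (hadamardD1_nonpos_of_tendsto ht hu hCφ hf) (h1 v)
  exact (h2 v hv hD1).not_ge (hadamardD2_zero_nonpos_of_tendsto ht hu hCφ hf)

/-- If `f⁻(x̄;u) ≥ 0` for all `u`, and `f⁻²(x̄;0;u) > 0` for every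
`u ≠ 0` with `f⁻(x̄;u) = 0`, then `x̄` is an isolated local minimizer of second order. -/
theorem isolated_local_min_order2_sufficient
    {E : Type*} [NormedAddCommGroup E] [InnerProductSpace ℝ E] [FiniteDimensional ℝ E]
    (f : E → EReal) (hproper : (∀ x, f x ≠ ⊥) ∧ ∃ x, f x ≠ ⊤)
    (x₀ : E) (hdom : f x₀ ≠ ⊤)
    (h1 : ∀ u : E, 0 ≤ hadamardD1 f x₀ u)
    (h2 : ∀ u : E, u ≠ 0 → hadamardD1 f x₀ u = 0 → 0 < hadamardD2 f x₀ 0 u) :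
    IsolatedLocalMinOrder2 f x₀ :=
  isolated_local_min_order2_sufficient_general f x₀ h1 h2
end

section
/- Let E be a real finite-dimensional Euclidean space and f : E → ℝ ∪ {+∞} a proper extended real-valued function. Then f is second-order invex (in terms of the lower Hadamard derivatives) if and only if every second-order stationary point x̄ ∈ dom f of f is a global minimizer of f. -/
/-!
If `0 ∈ ∂⁻f(x̄)`, either `f⁻²(x̄;0;·) ≥ 0`, so that `x̄` is second-order stationary, hence a
global minimizer, and `η₁ = η₂ = 0` witness invexity; or `f⁻²(x̄;0;u) < 0` for some `u`, and
since `f⁻²(x̄;0;·)` is positively homogeneous of degree two it is unbounded below, so some `η₂`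
beats `f(x) − f(x̄)`. Conversely, invexity at a second-order stationary point bounds
`f(x) − f(x̄)` below by a sum of two nonnegative terms.
-/

open Filter Topology

/-- `f` is second-order invex in terms of the lower Hadamard derivatives: for every
`x̄ ∈ dom f` and `x ∈ E` with `0 ∈ ∂⁻f(x̄)` there exist `η₁, η₂`
with `f(x) − f(x̄) ≥ f⁻(x̄;η₁) + f⁻²(x̄;0;η₂)`. -/
def SecondOrderInvex {E : Type*} [NormedAddCommGroup E] [InnerProductSpace ℝ E]
    (f : E → EReal) : Prop :=
  ∀ x₀ : E, f x₀ ≠ ⊤ → ∀ x : E, (0 : E →L[ℝ] ℝ) ∈ hadamardSubdiff f x₀ →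
    ∃ η₁ η₂ : E, hadamardD1 f x₀ η₁ + hadamardD2 f x₀ 0 η₂ ≤ f x - f x₀

/-- `x̄ ∈ dom f` is a second-order stationary point:
`f⁻(x̄;u) ≥ 0` and `f⁻²(x̄;0;u) ≥ 0` for all `u`. -/
def SecondOrderStationary {E : Type*} [NormedAddCommGroup E] [InnerProductSpace ℝ E]
    (f : E → EReal) (x₀ : E) : Prop :=
  ∀ u : E, 0 ≤ hadamardD1 f x₀ u ∧ 0 ≤ hadamardD2 f x₀ 0 u

lemma liminf_nhdsGT_prod_le {E : Type*} [TopologicalSpace E] {g : ℝ × E → EReal} {u : E}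
    {a : EReal} (h : ∀ t > 0, g (t, u) ≤ a) : liminf g (𝓝[>] (0 : ℝ) ×ˢ 𝓝 u) ≤ a := by
  refine liminf_le_of_frequently_le' (Frequently.filter_mono ?_
    ((tendsto_id (x := 𝓝[>] (0 : ℝ))).prodMk (tendsto_const_nhds (x := u))))
  rw [frequently_map]
  exact (eventually_mem_nhdsWithin (a := (0 : ℝ)) (s := Set.Ioi 0)).frequently.mono h

section HadamardDerivatives

variable {E : Type*} [NormedAddCommGroup E] [InnerProductSpace ℝ E]

lemma hadamardD1_zero_nonpos (f : E → EReal) (x : E) : hadamardD1 f x 0 ≤ 0 :=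
  liminf_nhdsGT_prod_le fun t ht => by
    simpa only [smul_zero, add_zero] using
      EReal.mul_nonpos_iff.2 (Or.inl ⟨EReal.coe_nonneg.2 (inv_nonneg.2 ht.le),
        EReal.sub_self_le_zero⟩)

lemma hadamardD2_zero_nonpos (f : E → EReal) (x : E) (x₁ : E →L[ℝ] ℝ) :
    hadamardD2 f x x₁ 0 ≤ 0 :=
  liminf_nhdsGT_prod_le fun t _ => by
    simpa only [smul_zero, add_zero, map_zero, mul_zero, EReal.coe_zero, sub_zero] using
      EReal.mul_nonpos_iff.2 (Or.inl ⟨EReal.coe_nonneg.2 (by positivity),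
        EReal.sub_self_le_zero⟩)

/-- Positive homogeneity of degree two, via the substitution `t ↦ t / c`, `u' ↦ c • u'`. -/
lemma hadamardD2_smul_le (f : E → EReal) (x : E) (x₁ : E →L[ℝ] ℝ) (u : E) {c b : ℝ}
    (hc : 0 < c) (hb : hadamardD2 f x x₁ u < b) :
    hadamardD2 f x x₁ (c • u) ≤ ((c ^ 2 * b : ℝ) : EReal) := by
  have hlt := (frequently_lt_of_liminf_lt (by isBoundedDefault) hb).and_eventually
    (Eventually.prod_inl (self_mem_nhdsWithin (s := Set.Ioi (0 : ℝ))) (𝓝 u))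
  have hrescale : Tendsto (fun p : ℝ × E => (p.1 / c, c • p.2))
      (𝓝[>] (0 : ℝ) ×ˢ 𝓝 u) (𝓝[>] (0 : ℝ) ×ˢ 𝓝 (c • u)) := by
    refine Tendsto.prodMap (f := fun t => t / c) ?_ ((tendsto_id (x := 𝓝 u)).const_smul c)
    exact tendsto_nhdsWithin_of_tendsto_nhds_of_eventually_within _
      (((continuous_id.div_const c).tendsto' 0 0 (zero_div c)).mono_left nhdsWithin_le_nhds)
      (eventually_mem_nhdsWithin.mono fun t ht => div_pos ht hc)
  refine liminf_le_of_frequently_le' (Frequently.filter_mono ?_ hrescale)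
  rw [frequently_map]
  refine hlt.mono fun ⟨t, v⟩ ⟨hle, _⟩ => ?_
  have hstep : (t / c) • c • v = t • v := by rw [smul_smul, div_mul_cancel₀ _ hc.ne']
  have hlin : t / c * x₁ (c • v) = t * x₁ v := by
    rw [map_smul, smul_eq_mul]; field_simp
  have hcoef : (2 / (t / c) ^ 2 : ℝ) = c ^ 2 * (2 / t ^ 2) := by field_simp
  dsimp only at hle ⊢
  rw [hstep, hlin, hcoef, EReal.coe_mul, mul_assoc, EReal.coe_mul]
  exact mul_le_mul_of_nonneg_left hle.le (EReal.coe_nonneg.2 (sq_nonneg c))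

lemma exists_hadamardD2_le_of_neg {f : E → EReal} {x : E} {x₁ : E →L[ℝ] ℝ} {u : E}
    (hu : hadamardD2 f x x₁ u < 0) {y : EReal} (hy : y ≠ ⊥) :
    ∃ v, hadamardD2 f x x₁ v ≤ y := by
  obtain ⟨b, hub, hb0⟩ := EReal.exists_between_coe_real hu
  obtain ⟨M, -, hM⟩ := EReal.exists_between_coe_real (bot_lt_iff_ne_bot.2 hy)
  have hb : b < 0 := EReal.coe_lt_coe_iff.1 hb0
  set c := √(max (M / b) 1)
  have hc : 0 < c := Real.sqrt_pos.2 (lt_max_of_lt_right one_pos)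
  have hcb : c ^ 2 * b ≤ M := by
    rw [Real.sq_sqrt (le_max_of_le_right zero_le_one)]
    exact (div_le_iff_of_neg hb).1 (le_max_left _ _)
  exact ⟨c • u, (hadamardD2_smul_le f x x₁ u hc hub).trans
    ((EReal.coe_le_coe_iff.2 hcb).trans hM.le)⟩

lemma SecondOrderStationary.zero_mem_hadamardSubdiff {f : E → EReal} {x : E}
    (h : SecondOrderStationary f x) : (0 : E →L[ℝ] ℝ) ∈ hadamardSubdiff f x := fun u => by
  simpa using (h u).1

lemma SecondOrderStationary.of_zero_mem_hadamardSubdiff {f : E → EReal} {x : E}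
    (h₁ : (0 : E →L[ℝ] ℝ) ∈ hadamardSubdiff f x) (h₂ : ∀ u, 0 ≤ hadamardD2 f x 0 u) :
    SecondOrderStationary f x := fun u => ⟨by simpa using h₁ u, h₂ u⟩

end HadamardDerivatives

theorem secondOrderInvex_iff_stationary_global_min_general
    {E : Type*} [NormedAddCommGroup E] [InnerProductSpace ℝ E]
    (f : E → EReal) (hproper : (∀ x, f x ≠ ⊥) ∧ ∃ x, f x ≠ ⊤) :
    SecondOrderInvex f ↔
      ∀ x₀ : E, f x₀ ≠ ⊤ → SecondOrderStationary f x₀ → ∀ x : E, f x₀ ≤ f x := by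
  have hmin_iff {x₀ x : E} (hx₀ : f x₀ ≠ ⊤) : 0 ≤ f x - f x₀ ↔ f x₀ ≤ f x :=
    EReal.sub_nonneg (Or.inr hx₀) (Or.inr (hproper.1 x₀))
  constructor
  · intro hinv x₀ hx₀ hstat x
    obtain ⟨η₁, η₂, hη⟩ := hinv x₀ hx₀ x hstat.zero_mem_hadamardSubdiff
    exact (hmin_iff hx₀).1 <| (add_nonneg (hstat η₁).1 (hstat η₂).2).trans hη
  · intro hmin x₀ hx₀ x h0
    suffices ∃ η₂, hadamardD2 f x₀ 0 η₂ ≤ f x - f x₀ by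
      obtain ⟨η₂, hη₂⟩ := this
      exact ⟨0, η₂, (add_le_of_nonpos_left (hadamardD1_zero_nonpos f x₀)).trans hη₂⟩
    by_cases hD2 : ∀ u, 0 ≤ hadamardD2 f x₀ 0 u
    · have hstat := SecondOrderStationary.of_zero_mem_hadamardSubdiff h0 hD2
      exact ⟨0, (hadamardD2_zero_nonpos f x₀ 0).trans ((hmin_iff hx₀).2 (hmin x₀ hx₀ hstat x))⟩
    · obtain ⟨u, hu⟩ := not_forall.1 hD2
      exact exists_hadamardD2_le_of_neg (not_le.1 hu) <| by
        simp [sub_eq_add_neg, EReal.add_eq_bot_iff, hproper.1 x, hx₀]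

/-- A proper extended real-valued function is second-order invex if and
only if every second-order stationary point `x̄ ∈ dom f` is a global minimizer of `f`. -/
theorem secondOrderInvex_iff_stationary_global_min
    {E : Type*} [NormedAddCommGroup E] [InnerProductSpace ℝ E] [FiniteDimensional ℝ E]
    (f : E → EReal) (hproper : (∀ x, f x ≠ ⊥) ∧ ∃ x, f x ≠ ⊤) :
    SecondOrderInvex f ↔
      ∀ x₀ : E, f x₀ ≠ ⊤ → SecondOrderStationary f x₀ → ∀ x : E, f x₀ ≤ f x :=
  secondOrderInvex_iff_stationary_global_min_general f hproper
end

section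
/- Let φ : [a,b] → ℝ be a lower semicontinuous function of one real variable, where a < b. Then there exists ξ with a < ξ ≤ b such that φ(a) − φ(b) ≤ φ'_D(ξ; a−b), where φ'_D(ξ; a−b) := liminf_{t↓0} (φ(ξ + t(a−b)) − φ(ξ))/t is the lower Dini directional derivative of φ at ξ in direction a−b (note ξ + t(a−b) ∈ [a,b] for all sufficiently small t > 0). -/
/-! Tilt `φ` by the linear function `c x` with `c = (φ a - φ b)/(b - a)`, so that the tilted
function takes equal values at `a` and `b`. Being lower semicontinuous on a compact interval it
attains its minimum, and since the endpoint values agree, at some `ξ ∈ (a, b]`. Moving from `ξ`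
towards `a` cannot decrease the tilted function, which says exactly that every difference
quotient of `φ` at `ξ` in direction `a - b` is at least `φ a - φ b`. -/

open Filter Topology

/-- The lower Dini directional derivative of a function `φ` of one real variable at `ξ`
in direction `d`: `φ'_D(ξ;d) = liminf_{t↓0} (φ(ξ+td) − φ(ξ))/t`, valued in `EReal`. -/
noncomputable def diniD1Real (φ : ℝ → ℝ) (ξ d : ℝ) : EReal :=
  Filter.liminf (fun t : ℝ => (((φ (ξ + t * d) - φ ξ) / t : ℝ) : EReal)) (𝓝[>] (0 : ℝ))

open Set

theorem LowerSemicontinuousOn.exists_mem_Ioc_isMinOn {ψ : ℝ → ℝ} {a b : ℝ} (hab : a < b)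
    (hψ : LowerSemicontinuousOn ψ (Icc a b)) (hψab : ψ a = ψ b) :
    ∃ ξ ∈ Ioc a b, IsMinOn ψ (Icc a b) ξ := by
  obtain ⟨ξ, hξ, hmin⟩ := hψ.exists_isMinOn (nonempty_Icc.2 hab.le) isCompact_Icc
  rcases hξ.1.eq_or_lt with rfl | hξa
  · exact ⟨b, ⟨hab, le_rfl⟩, fun y hy => hψab ▸ hmin hy⟩
  · exact ⟨ξ, ⟨hξa, hξ.2⟩, hmin⟩

theorem le_diniD1Real_of_eventually_le {φ : ℝ → ℝ} {ξ d m : ℝ}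
    (h : ∀ᶠ t in 𝓝[>] (0 : ℝ), φ ξ + t * m ≤ φ (ξ + t * d)) :
    (m : EReal) ≤ diniD1Real φ ξ d := by
  refine le_liminf_of_le (by isBoundedDefault) ?_
  filter_upwards [h, self_mem_nhdsWithin] with t ht (ht0 : 0 < t)
  rw [EReal.coe_le_coe_iff, le_div_iff₀ ht0]
  linarith

theorem le_diniD1Real_of_isMinOn_add_mul {φ : ℝ → ℝ} {s : Set ℝ} {ξ d c : ℝ}
    (hmin : IsMinOn (fun x => φ x + c * x) s ξ)
    (hs : ∀ᶠ t in 𝓝[>] (0 : ℝ), ξ + t * d ∈ s) :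
    ((-c * d : ℝ) : EReal) ≤ diniD1Real φ ξ d :=
  le_diniD1Real_of_eventually_le <| hs.mono fun t ht => by
    have : φ ξ + c * ξ ≤ φ (ξ + t * d) + c * (ξ + t * d) := hmin ht
    linarith

theorem eventually_add_mul_mem_Icc {a b ξ d : ℝ} (hξ : ξ ∈ Ioc a b) (hd : d ≤ 0) :
    ∀ᶠ t in 𝓝[>] (0 : ℝ), ξ + t * d ∈ Icc a b := by
  have hlim : Tendsto (fun t : ℝ => ξ + t * d) (𝓝[>] 0) (𝓝 ξ) := by
    have : Continuous fun t : ℝ => ξ + t * d := by fun_prop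
    simpa using (this.tendsto 0).mono_left nhdsWithin_le_nhds
  filter_upwards [hlim.eventually (lt_mem_nhds hξ.1), self_mem_nhdsWithin]
    with t hat (ht : 0 < t)
  exact ⟨hat.le, by nlinarith [hξ.2]⟩

/-- **Diewert's mean value theorem.** If `φ : [a,b] → ℝ` is lower
semicontinuous and `a < b`, then there is `ξ` with `a < ξ ≤ b` such that
`φ(a) − φ(b) ≤ φ'_D(ξ; a−b)`. -/
theorem diewert_mean_value (φ : ℝ → ℝ) (a b : ℝ) (hab : a < b)
    (hlsc : LowerSemicontinuousOn φ (Set.Icc a b)) :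
    ∃ ξ : ℝ, a < ξ ∧ ξ ≤ b ∧ ((φ a - φ b : ℝ) : EReal) ≤ diniD1Real φ ξ (a - b) := by
  obtain ⟨c, hslope⟩ : ∃ c, c * (b - a) = φ a - φ b :=
    ⟨_, div_mul_cancel₀ _ (sub_ne_zero.2 hab.ne')⟩
  have hψ : LowerSemicontinuousOn (fun x => φ x + c * x) (Icc a b) :=
    hlsc.add (continuousOn_const.mul continuousOn_id).lowerSemicontinuousOn
  obtain ⟨ξ, hξ, hmin⟩ :=
    hψ.exists_mem_Ioc_isMinOn hab (by linear_combination -hslope)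
  refine ⟨ξ, hξ.1, hξ.2, ?_⟩
  simpa only [show -c * (a - b) = φ a - φ b by linear_combination hslope] using
    le_diniD1Real_of_isMinOn_add_mul hmin (eventually_add_mul_mem_Icc hξ (sub_nonpos.2 hab.le))
end

section
/- Let E be a real finite-dimensional Euclidean space and f : E → ℝ be radially lower semicontinuous on some neighborhood of x ∈ E (i.e., lower semicontinuous along line segments in that neighborhood) and l-stable at x. Suppose the lower Dini directional derivative satisfies f'_D(x;u) = 0 for all u ∈ E. Then for every h ∈ E the limit lim_{t↓0, h'→h} (f(x + t h') − f(x + t h))/t² exists and equals 0. -/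
/-!
Since `f'_D(x; ·) = 0`, `l`-stability bounds the Dini derivatives near `x` by
`f'_D(y; u) ≤ K ‖y - x‖ ‖u‖`. For a radially lower semicontinuous function such a bound on the
Dini derivatives integrates along segments (a Dini mean value inequality), which gives
`|f z - f w| ≤ K ρ ‖z - w‖` on the closed ball of radius `ρ` about `x`. Taking `w = x + t h`,
`z = x + t h'` and `ρ = t (‖h‖ + 1)` bounds the quotient by `K (‖h‖ + 1) ‖h' - h‖`.
-/

open Filter Topology

/-- The lower Dini directional derivative
`f'_D(x;u) = liminf_{t↓0} (f(x+tu) − f(x))/t`, valued in `EReal`. -/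
noncomputable def diniD1 {E : Type*} [NormedAddCommGroup E] [InnerProductSpace ℝ E]
    (f : E → ℝ) (x u : E) : EReal :=
  Filter.liminf (fun t : ℝ => (((f (x + t • u) - f x) / t : ℝ) : EReal)) (𝓝[>] (0 : ℝ))

/-- `f` is `l`-stable at `x`: there are a neighborhood `U` of `x` and a constant `K > 0`
such that the lower Dini derivatives `f'_D(y;u)`, `f'_D(x;u)` are finite and satisfy
`|f'_D(y;u) − f'_D(x;u)| ≤ K‖y−x‖‖u‖` for all `y ∈ U`, `u ∈ E`. -/
def LStableAt {E : Type*} [NormedAddCommGroup E] [InnerProductSpace ℝ E]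
    (f : E → ℝ) (x : E) : Prop :=
  ∃ U ∈ 𝓝 x, ∃ K : ℝ, 0 < K ∧ ∀ y ∈ U, ∀ u : E,
    ∃ dy dx : ℝ, diniD1 f y u = (dy : EReal) ∧ diniD1 f x u = (dx : EReal) ∧
      |dy - dx| ≤ K * ‖y - x‖ * ‖u‖

section

open Set Metric

/-- The set where the linear bound holds is closed by lower semicontinuity, and the frequent
bound on right difference quotients pushes it past each of its points up to `b`. -/
theorem LowerSemicontinuousOn.le_add_mul_of_frequently_le {g : ℝ → ℝ} {a b M : ℝ}
    (hab : a ≤ b) (hg : LowerSemicontinuousOn g (Icc a b))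
    (hd : ∀ s ∈ Ico a b, ∃ᶠ τ in 𝓝[>] (0 : ℝ), g (s + τ) ≤ g s + M * τ) :
    g b ≤ g a + M * (b - a) := by
  set S : Set ℝ := {s | g s ≤ g a + M * (s - a)}
  have hlsc : LowerSemicontinuousOn (fun s => g s + (-g a - M * (s - a))) (Icc a b) :=
    hg.add (Continuous.continuousOn (by fun_prop)).lowerSemicontinuousOn
  have hS : IsClosed (S ∩ Icc a b) := by
    have := (hlsc.isCompact_inter_preimage_Iic isCompact_Icc 0).isClosed
    convert this using 1
    ext s
    simp only [S, mem_inter_iff, mem_ofPred, mem_preimage, mem_Iic]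
    constructor
    · rintro ⟨hs, hsI⟩
      exact ⟨hsI, by linarith⟩
    · rintro ⟨hsI, hs⟩
      exact ⟨by linarith, hsI⟩
  refine hS.Icc_subset_of_forall_exists_gt (by simp [S]) ?_ ⟨hab, le_rfl⟩
  rintro s ⟨hsS, hs⟩ y hy
  have hsmall : ∀ᶠ τ in 𝓝[>] (0 : ℝ), 0 < τ ∧ τ ≤ y - s :=
    Ioc_mem_nhdsGT (show 0 < y - s from sub_pos.2 hy)
  obtain ⟨τ, hgτ, hτ₀, hτy⟩ := ((hd s hs).and_eventually hsmall).exists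
  refine ⟨s + τ, ?_, by linarith, by linarith⟩
  change g (s + τ) ≤ g a + M * (s + τ - a)
  linarith [show g s ≤ g a + M * (s - a) from hsS]

variable {E : Type*} [NormedAddCommGroup E] [InnerProductSpace ℝ E]

theorem frequently_le_of_diniD1_lt {f : E → ℝ} {y u : E} {M : ℝ} (h : diniD1 f y u < M) :
    ∃ᶠ τ in 𝓝[>] (0 : ℝ), f (y + τ • u) ≤ f y + M * τ := by
  refine ((frequently_lt_of_liminf_lt (by isBoundedDefault) h).and_eventually
    self_mem_nhdsWithin).mono ?_
  rintro τ ⟨hlt, hτ : 0 < τ⟩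
  have := (div_lt_iff₀ hτ).1 (EReal.coe_lt_coe_iff.1 hlt)
  linarith

theorem le_add_of_diniD1_le {f : E → ℝ} {y u : E} {C : ℝ}
    (hlsc : LowerSemicontinuousOn (fun s : ℝ => f (y + s • u)) (Icc 0 1))
    (hd : ∀ s ∈ Ico (0 : ℝ) 1, diniD1 f (y + s • u) u ≤ C) :
    f (y + u) ≤ f y + C := by
  suffices ∀ M, C < M → f (y + u) ≤ f y + M by
    have := le_of_forall_gt_imp_ge_of_dense fun M hM => sub_le_iff_le_add'.2 (this M hM)
    linarith
  intro M hM
  have key := hlsc.le_add_mul_of_frequently_le zero_le_one fun s hs =>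
    (frequently_le_of_diniD1_lt ((hd s hs).trans_lt (EReal.coe_lt_coe_iff.2 hM))).mono
      fun τ hτ => by rwa [add_assoc, ← add_smul] at hτ
  simpa using key

def RadiallyLowerSemicontinuousOn (f : E → ℝ) (S : Set E) : Prop :=
  ∀ y ∈ S, ∀ d : E, LowerSemicontinuousOn (fun s : ℝ => f (y + s • d)) {s : ℝ | y + s • d ∈ S}

theorem RadiallyLowerSemicontinuousOn.mono {f : E → ℝ} {S T : Set E}
    (hf : RadiallyLowerSemicontinuousOn f S) (hTS : T ⊆ S) :
    RadiallyLowerSemicontinuousOn f T :=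
  fun y hy d => (hf y (hTS hy) d).mono fun _ hs => hTS hs

theorem LStableAt.exists_diniD1_le {f : E → ℝ} {x : E} (hf : LStableAt f x)
    (h₀ : ∀ u, diniD1 f x u = 0) :
    ∃ U ∈ 𝓝 x, ∃ K : ℝ, 0 ≤ K ∧ ∀ y ∈ U, ∀ u, diniD1 f y u ≤ (K * ‖y - x‖ * ‖u‖ : ℝ) := by
  obtain ⟨U, hU, K, hK, hstab⟩ := hf
  refine ⟨U, hU, K, hK.le, fun y hy u => ?_⟩
  obtain ⟨dy, dx, hdy, hdx, hbound⟩ := hstab y hy u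
  have hdx₀ : dx = 0 := by exact_mod_cast hdx.symm.trans (h₀ u)
  rw [hdx₀, sub_zero] at hbound
  rw [hdy, EReal.coe_le_coe_iff]
  exact (le_abs_self dy).trans hbound

theorem abs_sub_le_of_mem_closedBall {f : E → ℝ} {x w z : E} {ρ K : ℝ} (hK : 0 ≤ K)
    (hlsc : RadiallyLowerSemicontinuousOn f (closedBall x ρ))
    (hd : ∀ y ∈ closedBall x ρ, ∀ u, diniD1 f y u ≤ (K * ‖y - x‖ * ‖u‖ : ℝ))
    (hw : w ∈ closedBall x ρ) (hz : z ∈ closedBall x ρ) :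
    |f z - f w| ≤ K * ρ * ‖z - w‖ := by
  have one_sided : ∀ w ∈ closedBall x ρ, ∀ z ∈ closedBall x ρ,
      f z ≤ f w + K * ρ * ‖z - w‖ := by
    intro w hw z hz
    have hseg : ∀ s ∈ Icc (0 : ℝ) 1, w + s • (z - w) ∈ closedBall x ρ := fun s hs =>
      (convex_closedBall x ρ).add_smul_mem hw (by rwa [add_sub_cancel]) hs
    have := le_add_of_diniD1_le ((hlsc w hw (z - w)).mono hseg) fun s hs =>
      (hd _ (hseg s (Ico_subset_Icc_self hs)) _).trans <| EReal.coe_le_coe_iff.2 <|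
        mul_le_mul_of_nonneg_right (mul_le_mul_of_nonneg_left
          (mem_closedBall_iff_norm.1 (hseg s (Ico_subset_Icc_self hs))) hK) (norm_nonneg _)
    rwa [add_sub_cancel] at this
  rw [abs_sub_le_iff]
  constructor
  · linarith [one_sided w hw z hz]
  · rw [norm_sub_rev]
    linarith [one_sided z hz w hw]

theorem tendsto_sub_div_sq_of_abs_sub_le {F : Type*} [NormedAddCommGroup F] [NormedSpace ℝ F]
    {f : F → ℝ} {x : F} {r K : ℝ} (hr : 0 < r)
    (hf : ∀ ρ ≤ r, ∀ w ∈ closedBall x ρ, ∀ z ∈ closedBall x ρ, |f z - f w| ≤ K * ρ * ‖z - w‖)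
    (h : F) :
    Tendsto (fun p : ℝ × F => (f (x + p.1 • p.2) - f (x + p.1 • h)) / p.1 ^ 2)
      ((𝓝[>] (0 : ℝ)) ×ˢ 𝓝 h) (𝓝 0) := by
  have hC : 0 < ‖h‖ + 1 := by positivity
  have hnear : Ioo 0 (r / (‖h‖ + 1)) ×ˢ ball h 1 ∈ (𝓝[>] (0 : ℝ)) ×ˢ 𝓝 h :=
    prod_mem_prod (Ioo_mem_nhdsGT (div_pos hr hC)) (ball_mem_nhds h one_pos)
  have hbound : ∀ᶠ p : ℝ × F in (𝓝[>] (0 : ℝ)) ×ˢ 𝓝 h,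
      ‖(f (x + p.1 • p.2) - f (x + p.1 • h)) / p.1 ^ 2‖ ≤ K * (‖h‖ + 1) * ‖p.2 - h‖ := by
    filter_upwards [hnear]
    rintro ⟨t, h'⟩ ⟨⟨ht₀, htr⟩, hh'⟩
    dsimp only at ht₀ htr hh' ⊢
    replace hh' : ‖h' - h‖ < 1 := mem_ball_iff_norm.1 hh'
    have hmem : ∀ v : F, ‖v‖ ≤ ‖h‖ + 1 → x + t • v ∈ closedBall x (t * (‖h‖ + 1)) := by
      intro v hv
      rw [mem_closedBall_iff_norm, add_sub_cancel_left, norm_smul, Real.norm_of_nonneg ht₀.le]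
      gcongr
    have hlip := hf _ ((lt_div_iff₀ hC).1 htr).le _ (hmem h (by linarith))
      _ (hmem h' (by linarith [norm_le_insert' h' h]))
    rw [add_sub_add_left_eq_sub, ← smul_sub, norm_smul, Real.norm_of_nonneg ht₀.le] at hlip
    rw [Real.norm_eq_abs, abs_div, abs_of_pos (pow_pos ht₀ 2), div_le_iff₀ (pow_pos ht₀ 2)]
    exact hlip.trans_eq (by ring)
  have hlim : Tendsto (fun p : ℝ × F => K * (‖h‖ + 1) * ‖p.2 - h‖)
      ((𝓝[>] (0 : ℝ)) ×ˢ 𝓝 h) (𝓝 0) := by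
    have : Tendsto (fun v : F => K * (‖h‖ + 1) * ‖v - h‖) (𝓝 h) (𝓝 0) := by
      simpa using ((continuous_id.sub (continuous_const (y := h))).norm.const_mul
        (K * (‖h‖ + 1))).tendsto h
    exact this.comp tendsto_snd
  exact squeeze_zero_norm' hbound hlim

end

theorem lstable_radial_limit_zero_general
    {E : Type*} [NormedAddCommGroup E] [InnerProductSpace ℝ E]
    (f : E → ℝ) (x : E)
    (hrlsc : ∃ U ∈ 𝓝 x, ∀ y ∈ U, ∀ d : E,
      LowerSemicontinuousOn (fun s : ℝ => f (y + s • d)) {s : ℝ | y + s • d ∈ U})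
    (hstab : LStableAt f x)
    (hdini : ∀ u : E, diniD1 f x u = 0) :
    ∀ h : E, Filter.Tendsto
      (fun p : ℝ × E => (f (x + p.1 • p.2) - f (x + p.1 • h)) / p.1 ^ 2)
      ((𝓝[>] (0 : ℝ)) ×ˢ 𝓝 h) (𝓝 0) := by
  obtain ⟨U, hU, hlsc⟩ := hrlsc
  obtain ⟨V, hV, K, hK, hd⟩ := hstab.exists_diniD1_le hdini
  obtain ⟨r, hr, hball⟩ := Metric.nhds_basis_closedBall.mem_iff.1 (inter_mem hU hV)
  intro h
  refine tendsto_sub_div_sq_of_abs_sub_le (K := K) hr (fun ρ hρ w hw z hz => ?_) h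
  have hρU : Metric.closedBall x ρ ⊆ U ∩ V :=
    (Metric.closedBall_subset_closedBall hρ).trans hball
  exact abs_sub_le_of_mem_closedBall hK
    (RadiallyLowerSemicontinuousOn.mono hlsc fun _ hy => (hρU hy).1)
    (fun y hy => hd y (hρU hy).2) hw hz

/-- If `f : E → ℝ` is radially lower semicontinuous on some neighborhood
of `x` (lower semicontinuous along line segments in that neighborhood), `l`-stable at `x`,
and `f'_D(x;u) = 0` for all `u`, then for every `h ∈ E` the limit
`lim_{t↓0, h'→h} (f(x + t h') − f(x + t h))/t²` exists and equals `0`. -/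
theorem lstable_radial_limit_zero
    {E : Type*} [NormedAddCommGroup E] [InnerProductSpace ℝ E] [FiniteDimensional ℝ E]
    (f : E → ℝ) (x : E)
    (hrlsc : ∃ U ∈ 𝓝 x, ∀ y ∈ U, ∀ d : E,
      LowerSemicontinuousOn (fun s : ℝ => f (y + s • d)) {s : ℝ | y + s • d ∈ U})
    (hstab : LStableAt f x)
    (hdini : ∀ u : E, diniD1 f x u = 0) :
    ∀ h : E, Filter.Tendsto
      (fun p : ℝ × E => (f (x + p.1 • p.2) - f (x + p.1 • h)) / p.1 ^ 2)
      ((𝓝[>] (0 : ℝ)) ×ˢ 𝓝 h) (𝓝 0) :=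
  lstable_radial_limit_zero_general f x hrlsc hstab hdini
end

section
/- Let E be a real finite-dimensional Euclidean space and f : E → ℝ be continuous on some neighborhood of x̄ ∈ E, l-stable at x̄, and Fréchet differentiable at x̄ (differentiability at x̄ follows from continuity near x̄ and l-stability at x̄). Suppose f is strongly pseudoconvex at the point x̄ in the Dini sense. Then x̄ is an isolated local minimizer of second order for f if and only if ∇f(x̄) = 0. -/
open Filter Topology

/-!
If `x₀` is an isolated minimizer of second order it is a local minimizer, so `f' = 0`.
Conversely, if `f' = 0` then all lower Dini derivatives vanish at `x₀`, and l-stability bounds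
them below by `-K ‖z - x₀‖ ‖w‖` near `x₀`. A Dini mean value inequality along the chord from
`x₀ + t • u` to `x₀ + t • v`, which stays in the closed ball of radius `t`, gives
`f (x₀ + t • v) ≥ f (x₀ + t • u) - K t² ‖v - u‖`. Hence the quadratic growth that strong
pseudoconvexity provides in a unit direction `u` persists, at half the rate, in all nearby
directions, and compactness of the unit sphere makes the rate and the radius uniform.
-/

open Metric Set

theorem add_mul_sub_le_of_le_diniD1 {g : ℝ → ℝ} {a b m : ℝ} (hab : a ≤ b)
    (hg : ContinuousOn g (Icc a b)) (hm : ∀ s ∈ Ico a b, (m : EReal) ≤ diniD1 g s 1) :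
    g a + m * (b - a) ≤ g b := by
  have key : ∀ ⦃x⦄, x ∈ Icc a b → -g x ≤ -g a + -m * (x - a) := by
    refine image_le_of_liminf_slope_right_le_deriv_boundary (f := fun s => -g s)
      (B' := fun _ => -m) hg.neg (by simp) (by fun_prop) (fun x _ => ?_) (fun x hx r hr => ?_)
    · simpa using (((hasDerivWithinAt_id x (Ici x)).sub_const a).const_mul (-m)).const_add (-g a)
    have hlim : (m : EReal) ≤
        liminf (fun t : ℝ => (((g (x + t) - g x) / t : ℝ) : EReal)) (𝓝[>] 0) := by
      simpa [diniD1] using hm x hx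
    have hev : ∀ᶠ t in 𝓝[>] (0 : ℝ), -r < (g (x + t) - g x) / t := by
      have hrm : ((-r : ℝ) : EReal) < m := by exact_mod_cast (by linarith : -r < m)
      exact (eventually_lt_of_lt_liminf (hrm.trans_le hlim)).mono fun t ht => by exact_mod_cast ht
    have hmap : map (x + ·) (𝓝[>] (0 : ℝ)) = 𝓝[>] x := by simp
    rw [← hmap, frequently_map]
    refine (hev.mono fun t ht => ?_).frequently
    rw [slope_def_field, add_sub_cancel_left, neg_sub_neg, ← neg_sub, neg_div]
    linarith
  linarith [key (right_mem_Icc.2 hab)]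

theorem IsCompact.eventually_forall_of_forall_eventually_prod {X Y : Type*} [TopologicalSpace Y]
    {l : Filter X} {K : Set Y} (hK : IsCompact K) {P : X → Y → Prop}
    (hP : ∀ y ∈ K, ∀ᶠ z : X × Y in l ×ˢ 𝓝 y, P z.1 z.2) : ∀ᶠ x in l, ∀ y ∈ K, P x y :=
  Eventually.curry (hK.mem_prod_nhdsSet_of_forall hP) |>.mono fun _ h => h.self_of_nhdsSet

theorem eventually_nhdsNE_of_eventually_sphere {E : Type*} [NormedAddCommGroup E]
    [NormedSpace ℝ E] {x₀ : E} {Q : ℝ → E → Prop}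
    (h : ∀ᶠ t in 𝓝[>] (0 : ℝ), ∀ v ∈ sphere (0 : E) 1, Q t (x₀ + t • v)) :
    ∀ᶠ x in 𝓝[≠] x₀, Q ‖x - x₀‖ x := by
  filter_upwards [tendsto_norm_sub_self_nhdsNE x₀ h, self_mem_nhdsWithin] with x hx hne
  have ht : ‖x - x₀‖ ≠ 0 := norm_ne_zero_iff.2 (sub_ne_zero.2 hne)
  simpa [smul_inv_smul₀ ht] using hx (‖x - x₀‖⁻¹ • (x - x₀)) (by simp [norm_smul, ht])

section Dini

variable {E : Type*} [NormedAddCommGroup E] [InnerProductSpace ℝ E]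

theorem HasFDerivAt.diniD1_eq {f : E → ℝ} {f' : E →L[ℝ] ℝ} {x : E} (hf : HasFDerivAt f f' x)
    (u : E) : diniD1 f x u = f' u := by
  have hline : HasDerivAt (fun t : ℝ => f (x + t • u)) (f' u) 0 := by
    have hf₀ : HasFDerivAt f f' (x + (0 : ℝ) • u) := by simpa using hf
    have hray : HasDerivAt (fun t : ℝ => x + t • u) u 0 := by
      simpa using ((hasDerivAt_id (0 : ℝ)).smul_const u).const_add x
    exact hf₀.comp_hasDerivAt 0 hray
  have hslope : Tendsto (fun t : ℝ => (f (x + t • u) - f x) / t) (𝓝[>] 0) (𝓝 (f' u)) :=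
    ((hasDerivAt_iff_tendsto_slope.1 hline).mono_left (nhdsGT_le_nhdsNE 0)).congr fun t => by
      simp [slope_def_field]
  exact ((continuous_coe_real_ereal.tendsto _).comp hslope).liminf_eq

theorem add_le_of_le_diniD1_segment {f : E → ℝ} {y w : E} {m : ℝ}
    (hf : ContinuousOn (fun s : ℝ => f (y + s • w)) (Icc 0 1))
    (hm : ∀ s ∈ Ico (0 : ℝ) 1, (m : EReal) ≤ diniD1 f (y + s • w) w) : f y + m ≤ f (y + w) := by
  have hline : ∀ s : ℝ, diniD1 (fun s : ℝ => f (y + s • w)) s 1 = diniD1 f (y + s • w) w := by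
    intro s
    simp only [diniD1, smul_eq_mul, mul_one, add_smul, add_assoc]
  simpa using add_mul_sub_le_of_le_diniD1 zero_le_one hf fun s hs => (hline s).symm ▸ hm s hs

theorem add_sub_le_of_le_diniD1_of_mem_closedBall {f : E → ℝ} {f' : E →L[ℝ] ℝ} {x₀ a b : E}
    {K ρ : ℝ} (hK : 0 ≤ K) (hf : ContinuousOn f (closedBall x₀ ρ))
    (hD : ∀ z ∈ closedBall x₀ ρ, ∀ w, ((f' w - K * ‖z - x₀‖ * ‖w‖ : ℝ) : EReal) ≤ diniD1 f z w)
    (ha : a ∈ closedBall x₀ ρ) (hb : b ∈ closedBall x₀ ρ) :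
    f a + (f' (b - a) - K * ρ * ‖b - a‖) ≤ f b := by
  have hseg : ∀ s ∈ Icc (0 : ℝ) 1, a + s • (b - a) ∈ closedBall x₀ ρ := fun s hs =>
    (convex_closedBall x₀ ρ).add_smul_sub_mem ha hb hs
  have hcont : ContinuousOn (fun s : ℝ => f (a + s • (b - a))) (Icc 0 1) :=
    hf.comp (by fun_prop) hseg
  have hbound : ∀ s ∈ Ico (0 : ℝ) 1,
      ((f' (b - a) - K * ρ * ‖b - a‖ : ℝ) : EReal) ≤ diniD1 f (a + s • (b - a)) (b - a) := by
    intro s hs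
    have hz := hseg s (Ico_subset_Icc_self hs)
    refine le_trans ?_ (hD _ hz (b - a))
    gcongr
    exact mem_closedBall_iff_norm.1 hz
  simpa using add_le_of_le_diniD1_segment hcont hbound

theorem LStableAt.exists_le_diniD1 {f : E → ℝ} {f' : E →L[ℝ] ℝ} {x₀ : E} (hstab : LStableAt f x₀)
    (hf : HasFDerivAt f f' x₀) : ∃ U ∈ 𝓝 x₀, ∃ K : ℝ, 0 < K ∧
      ∀ z ∈ U, ∀ w, ((f' w - K * ‖z - x₀‖ * ‖w‖ : ℝ) : EReal) ≤ diniD1 f z w := by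
  obtain ⟨U, hU, K, hK, hstab⟩ := hstab
  refine ⟨U, hU, K, hK, fun z hz w => ?_⟩
  obtain ⟨dz, dx, hdz, hdx, hle⟩ := hstab z hz w
  have hdx' : dx = f' w := EReal.coe_injective (hdx.symm.trans (hf.diniD1_eq w))
  rw [hdz, EReal.coe_le_coe_iff, ← hdx']
  linarith [neg_abs_le (dz - dx)]

/-- The rate is a filter variable too (`p.1.1`), so that compactness of the sphere can make it
uniform together with the radius. -/
theorem eventually_add_mul_sq_le_near_direction {f : E → ℝ} {x₀ u : E} {U : Set E} {K : ℝ}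
    (hK : 0 ≤ K) (hU : U ∈ 𝓝 x₀) (hf : ContinuousOn f U)
    (hD : ∀ z ∈ U, ∀ w, ((-(K * ‖z - x₀‖ * ‖w‖) : ℝ) : EReal) ≤ diniD1 f z w) (hu : ‖u‖ ≤ 1)
    (hgrowth : ∃ δ > 0, ∃ α > 0, ∀ t : ℝ, 0 < t → t < δ → f x₀ + α * t ^ 2 ≤ f (x₀ + t • u)) :
    ∀ᶠ p : (ℝ × ℝ) × E in (𝓝[>] 0 ×ˢ 𝓝[>] 0) ×ˢ 𝓝 u,
      ‖p.2‖ ≤ 1 → f x₀ + p.1.1 * p.1.2 ^ 2 ≤ f (x₀ + p.1.2 • p.2) := by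
  obtain ⟨δ, hδ, α, hα, hquad⟩ := hgrowth
  have hcoef : ∀ᶠ a in 𝓝[>] (0 : ℝ), a < α / 2 :=
    nhdsWithin_le_nhds (eventually_lt_nhds (half_pos hα))
  have hradius : ∀ᶠ t in 𝓝[>] (0 : ℝ), t ∈ Ioo 0 δ ∧ closedBall x₀ t ⊆ U :=
    Eventually.and (Ioo_mem_nhdsGT hδ) (nhdsWithin_le_nhds (eventually_closedBall_subset hU))
  have hdir : ∀ᶠ v in 𝓝 u, K * ‖v - u‖ < α / 2 := by
    have : Tendsto (fun v => K * ‖v - u‖) (𝓝 u) (𝓝 0) := by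
      simpa using ((continuous_id.sub (continuous_const (y := u))).norm.const_mul K).tendsto u
    exact this.eventually (eventually_lt_nhds (half_pos hα))
  filter_upwards [(hcoef.prod_mk hradius).prod_mk hdir]
  rintro ⟨⟨a, t⟩, v⟩ ⟨⟨ha, ⟨ht, htδ⟩, hball⟩, hv⟩ hv1
  have hmem : ∀ y : E, ‖y‖ ≤ 1 → x₀ + t • y ∈ closedBall x₀ t := fun y hy => by
    simpa [norm_smul, abs_of_pos ht] using mul_le_of_le_one_right ht.le hy
  have hnear := add_sub_le_of_le_diniD1_of_mem_closedBall (f' := 0) hK (hf.mono hball)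
    (fun z hz w => by simpa using hD z (hball hz) w) (hmem u hu) (hmem v hv1)
  rw [add_sub_add_left_eq_sub, ← smul_sub, norm_smul, Real.norm_of_nonneg ht.le] at hnear
  have hsq : 0 ≤ t ^ 2 := sq_nonneg t
  calc f x₀ + a * t ^ 2 ≤ f x₀ + α * t ^ 2 - α / 2 * t ^ 2 := by nlinarith
    _ ≤ f (x₀ + t • u) - K * t * (t * ‖v - u‖) := by nlinarith [hquad t ht htδ]
    _ ≤ f (x₀ + t • v) := by simpa [sub_eq_add_neg] using hnear

end Dini

/-- Let `f : E → ℝ` be continuous on some neighborhood of `x̄`, `l`-stable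
at `x̄`, and Fréchet differentiable at `x̄`. If `f` is strongly pseudoconvex at `x̄` in the
Dini sense, then `x̄` is an isolated local minimizer of second order if and only if
`∇f(x̄) = 0`. -/
theorem strongly_pseudoconvex_isolated_min_iff_deriv_zero
    {E : Type*} [NormedAddCommGroup E] [InnerProductSpace ℝ E] [FiniteDimensional ℝ E]
    (f : E → ℝ) (x₀ : E) (f' : E →L[ℝ] ℝ)
    (hcont : ∃ U ∈ 𝓝 x₀, ContinuousOn f U)
    (hstab : LStableAt f x₀)
    (hdiff : HasFDerivAt f f' x₀)
    (hspc : ∀ u : E, ‖u‖ = 1 → diniD1 f x₀ u = 0 →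
      ∃ δ : ℝ, 0 < δ ∧ ∃ α : ℝ, 0 < α ∧ ∀ t : ℝ, 0 < t → t < δ →
        f x₀ + α * t ^ 2 ≤ f (x₀ + t • u)) :
    (∃ C : ℝ, 0 < C ∧ ∃ N ∈ 𝓝 x₀, ∀ x ∈ N, x ≠ x₀ → f x₀ + C * ‖x - x₀‖ ^ 2 < f x) ↔
      f' = 0 := by
  constructor
  · rintro ⟨C, hC, N, hN, hgrowth⟩
    refine IsLocalMin.hasFDerivAt_eq_zero ?_ hdiff
    filter_upwards [hN] with x hx
    rcases eq_or_ne x x₀ with rfl | hne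
    · exact le_rfl
    · nlinarith [hgrowth x hx hne, sq_nonneg ‖x - x₀‖]
  rintro rfl
  obtain ⟨Uc, hUc, hfc⟩ := hcont
  obtain ⟨U, hU, K, hK, hD⟩ := hstab.exists_le_diniD1 hdiff
  have hsphere : ∀ᶠ p in 𝓝[>] (0 : ℝ) ×ˢ 𝓝[>] 0, ∀ v ∈ sphere (0 : E) 1,
      ‖v‖ ≤ 1 → f x₀ + p.1 * p.2 ^ 2 ≤ f (x₀ + p.2 • v) :=
    (isCompact_sphere 0 1).eventually_forall_of_forall_eventually_prod fun u hu =>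
      have hu₁ : ‖u‖ = 1 := mem_sphere_zero_iff_norm.1 hu
      eventually_add_mul_sq_le_near_direction hK.le (inter_mem hUc hU)
        (hfc.mono inter_subset_left) (fun z hz w => by simpa using hD z hz.2 w) hu₁.le
        (hspc u hu₁ (by simp [hdiff.diniD1_eq u]))
  obtain ⟨α, hsmall, hα⟩ := (hsphere.curry.and self_mem_nhdsWithin).exists
  have hnear : ∀ᶠ x in 𝓝[≠] x₀, f x₀ + α * ‖x - x₀‖ ^ 2 ≤ f x :=
    eventually_nhdsNE_of_eventually_sphere (Q := fun t x => f x₀ + α * t ^ 2 ≤ f x) <|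
      hsmall.mono fun t ht v hv => ht v hv (mem_sphere_zero_iff_norm.1 hv).le
  refine ⟨α / 2, half_pos hα, _, eventually_nhdsWithin_iff.1 hnear, fun x hx hne => ?_⟩
  have hpos : 0 < ‖x - x₀‖ := norm_pos_iff.2 (sub_ne_zero.2 hne)
  nlinarith [hx hne, mul_pos (half_pos hα) (pow_pos hpos 2)]
end

section
/- Let f : X → ℝⁿ be defined on a set X ⊆ ℝˢ, let S ⊆ X, x̄ ∈ S, and k ≥ 1. Then the following two properties of x̄ are equivalent: (i) there exist a constant A > 0 and a neighborhood N of x̄ such that (f(x) + ℝⁿ₊) ∩ B(f(x̄), A‖x−x̄‖ᵏ) = ∅ for all x ∈ S ∩ N with x ≠ x̄; (ii) there exist a constant A > 0 and a neighborhood N of x̄ such that for every x ∈ S ∩ N with x ≠ x̄ there exists an index i ∈ {1,…,n} (depending on x) with f_i(x) > f_i(x̄) + A‖x−x̄‖ᵏ. -/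
open Filter Topology

/-! A vector `w` with `wᵢ > zᵢ + r` for some `i` is at distance more than `r` from `z`, and so is
every point of `w + ℝⁿ₊`; this gives (ii) ⇒ (i) with the same constant. Conversely, if every
`f_i(x) ≤ f_i(x̄) + r`, the coordinatewise maximum of `f(x)` and `f(x̄)` lies in `f(x) + ℝⁿ₊` and
within `√n · r` of `f(x̄)`; so (i) with constant `A` gives (ii) with constant `A / (√n + 1)`. -/

namespace EuclideanSpace

def translatedOrthant {ι : Type*} (y : EuclideanSpace ℝ ι) : Set (EuclideanSpace ℝ ι) :=
  {w | ∃ c : EuclideanSpace ℝ ι, (∀ i, 0 ≤ c i) ∧ w = y + c}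

variable {ι : Type*} [Fintype ι]

theorem dist_le_sqrt_card_mul_of_abs_sub_le {y z : EuclideanSpace ℝ ι} {C : ℝ} (hC : 0 ≤ C)
    (h : ∀ i, |y i - z i| ≤ C) : dist y z ≤ √(Fintype.card ι) * C := by
  rw [EuclideanSpace.dist_eq]
  calc √(∑ i, dist (y i) (z i) ^ 2) ≤ √(∑ _i : ι, C ^ 2) := by
        gcongr with i
        exact (Real.dist_eq _ _).trans_le (h i)
    _ = √(Fintype.card ι) * C := by
        rw [Finset.sum_const, Finset.card_univ, nsmul_eq_mul,
          Real.sqrt_mul (Nat.cast_nonneg _), Real.sqrt_sq hC]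

theorem translatedOrthant_inter_ball_eq_empty {y z : EuclideanSpace ℝ ι} {r : ℝ}
    (h : ∃ i, z i + r < y i) : translatedOrthant y ∩ Metric.ball z r = ∅ := by
  obtain ⟨i, hi⟩ := h
  refine Set.eq_empty_of_forall_notMem fun w ⟨⟨c, hc, hw⟩, hwz⟩ => ?_
  have hwi : y i ≤ w i := by simpa [hw] using hc i
  have hdist : |w i - z i| ≤ dist w z := by
    simpa only [Real.dist_eq] using PiLp.dist_apply_le w z i
  linarith [le_abs_self (w i - z i), Metric.mem_ball.1 hwz]

theorem exists_lt_of_translatedOrthant_inter_ball_eq_empty {y z : EuclideanSpace ℝ ι} {r : ℝ}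
    (hr : 0 < r) (h : translatedOrthant y ∩ Metric.ball z ((√(Fintype.card ι) + 1) * r) = ∅) :
    ∃ i, z i + r < y i := by
  by_contra! hle
  set w : EuclideanSpace ℝ ι := WithLp.toLp 2 fun i => max (y i) (z i)
  have hw : w ∈ translatedOrthant y :=
    ⟨w - y, fun i => by simp [w], (add_sub_cancel y w).symm⟩
  have hwz : ∀ i, |w i - z i| ≤ r := fun i => by
    rw [abs_le]
    constructor <;> simp only [w] <;>
      linarith [le_max_right (y i) (z i), max_le (hle i) (le_add_of_nonneg_right hr.le)]
  have hball : w ∈ Metric.ball z ((√(Fintype.card ι) + 1) * r) := by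
    rw [Metric.mem_ball]
    linarith [dist_le_sqrt_card_mul_of_abs_sub_le hr.le hwz]
  exact (Set.eq_empty_iff_forall_notMem.1 h) w ⟨hw, hball⟩

end EuclideanSpace

open EuclideanSpace in
theorem strict_local_min_iff_isolated_local_min_general (s n : ℕ)
    (f : EuclideanSpace ℝ (Fin s) → EuclideanSpace ℝ (Fin n))
    (S : Set (EuclideanSpace ℝ (Fin s)))
    (x₀ : EuclideanSpace ℝ (Fin s))
    (k : ℕ) :
    (∃ A : ℝ, 0 < A ∧ ∃ N ∈ 𝓝 x₀, ∀ x ∈ S ∩ N, x ≠ x₀ →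
        {y : EuclideanSpace ℝ (Fin n) |
            ∃ c : EuclideanSpace ℝ (Fin n), (∀ i, 0 ≤ c i) ∧ y = f x + c} ∩
          Metric.ball (f x₀) (A * ‖x - x₀‖ ^ k) = ∅) ↔
      ∃ A : ℝ, 0 < A ∧ ∃ N ∈ 𝓝 x₀, ∀ x ∈ S ∩ N, x ≠ x₀ →
        ∃ i : Fin n, f x₀ i + A * ‖x - x₀‖ ^ k < f x i := by
  constructor
  · rintro ⟨A, hA, N, hN, h⟩
    have hd : 0 < √(n : ℝ) + 1 := by positivity
    refine ⟨A / (√n + 1), div_pos hA hd, N, hN, fun x hx hne => ?_⟩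
    have hr : 0 < A / (√n + 1) * ‖x - x₀‖ ^ k := by
      have := norm_pos_iff.2 (sub_ne_zero.2 hne)
      positivity
    refine exists_lt_of_translatedOrthant_inter_ball_eq_empty hr ?_
    rw [Fintype.card_fin, ← mul_assoc, mul_div_cancel₀ A hd.ne']
    exact h x hx hne
  · rintro ⟨A, hA, N, hN, h⟩
    exact ⟨A, hA, N, hN, fun x hx hne => translatedOrthant_inter_ball_eq_empty (h x hx hne)⟩

/-- For a vector function `f`, a set `S`, a point `x̄ ∈ S` and an order
`k ≥ 1`, the following are equivalent: (i) Jiménez's strict local minimality of order `k`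
(the set `f(x) + ℝⁿ₊` misses the open ball `B(f(x̄), A‖x−x̄‖ᵏ)` for all `x ∈ S ∩ N`,
`x ≠ x̄`); (ii) the isolated local minimality of order `k` (for every such `x` some
component satisfies `fᵢ(x) > fᵢ(x̄) + A‖x−x̄‖ᵏ`). The constants `A` may differ. -/
theorem strict_local_min_iff_isolated_local_min (s n : ℕ)
    (f : EuclideanSpace ℝ (Fin s) → EuclideanSpace ℝ (Fin n))
    (S : Set (EuclideanSpace ℝ (Fin s)))
    (x₀ : EuclideanSpace ℝ (Fin s)) (hx₀ : x₀ ∈ S)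
    (k : ℕ) (hk : 1 ≤ k) :
    (∃ A : ℝ, 0 < A ∧ ∃ N ∈ 𝓝 x₀, ∀ x ∈ S ∩ N, x ≠ x₀ →
        {y : EuclideanSpace ℝ (Fin n) |
            ∃ c : EuclideanSpace ℝ (Fin n), (∀ i, 0 ≤ c i) ∧ y = f x + c} ∩
          Metric.ball (f x₀) (A * ‖x - x₀‖ ^ k) = ∅) ↔
      ∃ A : ℝ, 0 < A ∧ ∃ N ∈ 𝓝 x₀, ∀ x ∈ S ∩ N, x ≠ x₀ →
        ∃ i : Fin n, f x₀ i + A * ‖x - x₀‖ ^ k < f x i :=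
  strict_local_min_iff_isolated_local_min_general s n f S x₀ k
end

section
/- Let E be a real finite-dimensional Euclidean space, f : E → ℝ ∪ {+∞} a proper extended real-valued function, and x̄ ∈ dom f a point at which the Dini necessary conditions fail, i.e., either there is u ∈ E with f'_D(x̄;u) < 0, or there is u ∈ E with f'_D(x̄;u) = 0 and f''_D(x̄;u) < 0. Then the Hadamard conditions also fail at x̄: either there is v ∈ E with f⁻(x̄;v) < 0, or 0 ∈ ∂⁻f(x̄) and there is v ∈ E with f⁻²(x̄;0;v) < 0. -/
open Filter Topology

/-- The lower Dini directional derivative of an extended real-valued function: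
`f'_D(x;u) = liminf_{t↓0} (f(x+tu) − f(x))/t`. -/
noncomputable def diniD1E {E : Type*} [NormedAddCommGroup E] [InnerProductSpace ℝ E]
    (f : E → EReal) (x u : E) : EReal :=
  Filter.liminf (fun t : ℝ => ((t⁻¹ : ℝ) : EReal) * (f (x + t • u) - f x)) (𝓝[>] (0 : ℝ))

/-- The second-order lower Dini directional derivative relative to the (real) value `d`
of `f'_D(x;u)`: `f''_D(x;u) = liminf_{t↓0} 2(f(x+tu) − f(x) − t·d)/t²`. -/
noncomputable def diniD2E {E : Type*} [NormedAddCommGroup E] [InnerProductSpace ℝ E]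
    (f : E → EReal) (x u : E) (d : ℝ) : EReal :=
  Filter.liminf
    (fun t : ℝ => ((2 / t ^ 2 : ℝ) : EReal) * (f (x + t • u) - f x - ((t * d : ℝ) : EReal)))
    (𝓝[>] (0 : ℝ))

/-!
The Hadamard liminfs are taken over `t ↓ 0` and `u' → u`, the Dini ones only along `u' = u`,
so `f⁻(x;u) ≤ f'_D(x;u)` and `f⁻²(x;0;u) ≤ f''_D(x;u)` (with `f'_D(x;u) = 0`). A negative Dini
derivative thus gives a negative Hadamard one, except that the second-order Hadamard condition
also asks for `0 ∈ ∂⁻f(x)`; when this fails, some `f⁻(x;v)` is already negative.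
-/

theorem Filter.liminf_prod_nhds_le_liminf_apply {α β γ : Type*} [TopologicalSpace β]
    [CompleteLattice γ] (g : α × β → γ) (l : Filter α) (b : β) :
    liminf g (l ×ˢ 𝓝 b) ≤ liminf (fun a => g (a, b)) l := by
  have hslice : Tendsto (fun a => (a, b)) l (l ×ˢ 𝓝 b) :=
    tendsto_id.prodMk tendsto_const_nhds
  have := liminf_le_liminf_of_le (u := g) hslice
  rwa [← liminf_comp] at this

section

variable {E : Type*} [NormedAddCommGroup E] [InnerProductSpace ℝ E]

theorem hadamardD1_le_diniD1E (f : E → EReal) (x u : E) :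
    hadamardD1 f x u ≤ diniD1E f x u :=
  liminf_prod_nhds_le_liminf_apply _ _ u

theorem hadamardD2_zero_le_diniD2E (f : E → EReal) (x u : E) :
    hadamardD2 f x 0 u ≤ diniD2E f x u 0 := by
  simpa only [hadamardD2, diniD2E, zero_apply]
    using liminf_prod_nhds_le_liminf_apply _ _ u

theorem exists_hadamardD1_neg_of_zero_notMem_hadamardSubdiff {f : E → EReal} {x : E}
    (h : (0 : E →L[ℝ] ℝ) ∉ hadamardSubdiff f x) : ∃ v : E, hadamardD1 f x v < 0 := by
  simpa only [hadamardSubdiff, Set.mem_ofPred_eq, not_forall, not_le,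
    zero_apply, EReal.coe_zero] using h

end

theorem dini_conditions_fail_implies_hadamard_fail_general
    {E : Type*} [NormedAddCommGroup E] [InnerProductSpace ℝ E]
    (f : E → EReal)
    (x₀ : E)
    (hfail : (∃ u : E, diniD1E f x₀ u < 0) ∨
      ∃ u : E, diniD1E f x₀ u = 0 ∧ diniD2E f x₀ u 0 < 0) :
    (∃ v : E, hadamardD1 f x₀ v < 0) ∨
      ((0 : E →L[ℝ] ℝ) ∈ hadamardSubdiff f x₀ ∧ ∃ v : E, hadamardD2 f x₀ 0 v < 0) := by
  rcases hfail with ⟨u, hu⟩ | ⟨u, -, hu⟩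
  · exact Or.inl ⟨u, (hadamardD1_le_diniD1E f x₀ u).trans_lt hu⟩
  by_cases h0 : (0 : E →L[ℝ] ℝ) ∈ hadamardSubdiff f x₀
  · exact Or.inr ⟨h0, u, (hadamardD2_zero_le_diniD2E f x₀ u).trans_lt hu⟩
  · exact Or.inl (exists_hadamardD1_neg_of_zero_notMem_hadamardSubdiff h0)

/-- If the Dini necessary conditions fail at `x̄ ∈ dom f` (either
`f'_D(x̄;u) < 0` for some `u`, or `f'_D(x̄;u) = 0` and `f''_D(x̄;u) < 0` for some `u`),
then the Hadamard conditions also fail at `x̄`: either `f⁻(x̄;v) < 0` for some `v`, or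
`0 ∈ ∂⁻f(x̄)` and `f⁻²(x̄;0;v) < 0` for some `v`. -/
theorem dini_conditions_fail_implies_hadamard_fail
    {E : Type*} [NormedAddCommGroup E] [InnerProductSpace ℝ E] [FiniteDimensional ℝ E]
    (f : E → EReal) (hproper : (∀ x, f x ≠ ⊥) ∧ ∃ x, f x ≠ ⊤)
    (x₀ : E) (hdom : f x₀ ≠ ⊤)
    (hfail : (∃ u : E, diniD1E f x₀ u < 0) ∨
      ∃ u : E, diniD1E f x₀ u = 0 ∧ diniD2E f x₀ u 0 < 0) :
    (∃ v : E, hadamardD1 f x₀ v < 0) ∨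
      ((0 : E →L[ℝ] ℝ) ∈ hadamardSubdiff f x₀ ∧ ∃ v : E, hadamardD2 f x₀ 0 v < 0) :=
  dini_conditions_fail_implies_hadamard_fail_general f x₀ hfail
end

section
/- Let E be a real finite-dimensional Euclidean space and f : E → ℝ be of class C^{1,1} on some neighborhood of x ∈ E (continuously differentiable with locally Lipschitz gradient). If ∇f(x) = 0 and f''_{BP}(x;u,u) := liminf_{t↓0} (∇f(x+tu)(u) − ∇f(x)(u))/t > 0 for every u ∈ E with u ≠ 0, then f attains a strict local minimum at x; in fact x is an isolated local minimizer of second order. -/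
/-!
Along a unit direction `v`, the Lipschitz bound on `f'` together with `f' x = 0` makes the
difference quotient `f' (x + t • v) v / t` a `2K`-Lipschitz function of `v`, uniformly in
small `t > 0`. Hence the pointwise positivity of its `liminf` spreads to a neighbourhood of each
direction, and compactness of the unit sphere yields `m > 0` and `δ > 0` with
`f' (x + t • v) v ≥ m t` for all unit `v` and `0 < t < δ`. So `t ↦ f (x + t • v) - m t² / 2`
is monotone on `[0, δ)`, i.e. `f (x + s • v) ≥ f x + m s² / 2`.
-/

open Filter Topology Set Metric

theorem Filter.exists_pos_eventually_lt_of_pos_liminf {α : Type*} {l : Filter α} {g : α → ℝ}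
    (h : 0 < liminf (fun t => (g t : EReal)) l) : ∃ ε > 0, ∀ᶠ t in l, ε < g t := by
  obtain ⟨ε, hε, hεlt⟩ := EReal.lt_iff_exists_real_btwn.mp h
  exact ⟨ε, EReal.coe_pos.mp hε,
    (eventually_lt_of_lt_liminf hεlt).mono fun _ ht => EReal.coe_lt_coe_iff.mp ht⟩

theorem IsCompact.exists_pos_eventually_forall_le {X ι : Type*} [TopologicalSpace X]
    {K : Set X} (hK : IsCompact K) {l : Filter ι} {G : X → ι → ℝ}
    (hloc : ∀ u ∈ K, ∃ V ∈ 𝓝[K] u, ∃ c > 0, ∀ᶠ t in l, ∀ v ∈ V, c ≤ G v t) :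
    ∃ c > 0, ∀ᶠ t in l, ∀ v ∈ K, c ≤ G v t := by
  refine hK.induction_on (p := fun V => ∃ c > 0, ∀ᶠ t in l, ∀ v ∈ V, c ≤ G v t)
    ⟨1, one_pos, .of_forall fun _ _ hv => hv.elim⟩ ?_ ?_ hloc
  · rintro V W hVW ⟨c, hc, hW⟩
    exact ⟨c, hc, hW.mono fun t ht v hv => ht v (hVW hv)⟩
  · rintro V W ⟨c, hc, hV⟩ ⟨d, hd, hW⟩
    refine ⟨min c d, lt_min hc hd, (hV.and hW).mono fun t ht v hv => ?_⟩
    rcases hv with hv | hv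
    · exact (min_le_left c d).trans (ht.1 v hv)
    · exact (min_le_right c d).trans (ht.2 v hv)

theorem add_half_mul_sq_le_of_hasDerivAt {φ φ' : ℝ → ℝ} {m s : ℝ} (hs : 0 ≤ s)
    (hφ : ∀ t ∈ Icc 0 s, HasDerivAt φ (φ' t) t) (hm : ∀ t ∈ Ioo 0 s, m * t ≤ φ' t) :
    φ 0 + m / 2 * s ^ 2 ≤ φ s := by
  have hψ : ∀ t ∈ Icc 0 s, HasDerivAt (fun t => φ t - m / 2 * t ^ 2) (φ' t - m * t) t :=
    fun t ht => ((hφ t ht).sub ((hasDerivAt_pow 2 t).const_mul (m / 2))).congr_deriv (by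
      push_cast; ring)
  have hmono : MonotoneOn (fun t => φ t - m / 2 * t ^ 2) (Icc 0 s) := by
    refine monotoneOn_of_hasDerivWithinAt_nonneg (f' := fun t => φ' t - m * t) (convex_Icc 0 s)
      (fun t ht => (hψ t ht).continuousAt.continuousWithinAt) (fun t ht => ?_) (fun t ht => ?_)
    · exact (hψ t (interior_subset ht)).hasDerivWithinAt
    · rw [interior_Icc] at ht
      exact sub_nonneg.mpr (hm t ht)
  have := hmono (left_mem_Icc.mpr hs) (right_mem_Icc.mpr hs) hs
  simp only at this
  linarith

theorem LipschitzOnWith.norm_apply_sub_apply_le {E F : Type*} [SeminormedAddCommGroup E]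
    [NormedSpace ℝ E] [SeminormedAddCommGroup F] [NormedSpace ℝ F] {f' : E → E →L[ℝ] F}
    {U : Set E} {K : NNReal} (hK : LipschitzOnWith K f' U) {x a b : E} (hx : x ∈ U)
    (hx0 : f' x = 0) (ha : a ∈ U) (hb : b ∈ U) (w z : E) :
    ‖f' a w - f' b z‖ ≤ K * ‖a - b‖ * ‖w‖ + K * ‖b - x‖ * ‖w - z‖ := by
  have hab : ‖f' a - f' b‖ ≤ K * ‖a - b‖ := by
    simpa only [dist_eq_norm] using hK.dist_le_mul a ha b hb
  have hbx : ‖f' b‖ ≤ K * ‖b - x‖ := by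
    simpa only [dist_eq_norm, hx0, sub_zero] using hK.dist_le_mul b hb x hx
  calc ‖f' a w - f' b z‖ = ‖(f' a - f' b) w + f' b (w - z)‖ := by
        rw [sub_apply, map_sub]; abel_nf
    _ ≤ ‖f' a - f' b‖ * ‖w‖ + ‖f' b‖ * ‖w - z‖ :=
        norm_add_le_of_le ((f' a - f' b).le_opNorm w) ((f' b).le_opNorm (w - z))
    _ ≤ K * ‖a - b‖ * ‖w‖ + K * ‖b - x‖ * ‖w - z‖ := by gcongr

section BednarikPastor

variable {E : Type*} [NormedAddCommGroup E] [NormedSpace ℝ E] {f' : E → E →L[ℝ] ℝ} {x : E}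
  {U : Set E}

noncomputable def bpQuotient (f' : E → E →L[ℝ] ℝ) (x u : E) (t : ℝ) : ℝ :=
  (f' (x + t • u) u - f' x u) / t

theorem abs_bpQuotient_sub_le {K : NNReal} (hK : LipschitzOnWith K f' U) (hx : x ∈ U)
    (hx0 : f' x = 0) {u v : E} (hu : ‖u‖ = 1) (hv : ‖v‖ = 1) {t : ℝ} (ht : 0 < t)
    (hut : x + t • u ∈ U) (hvt : x + t • v ∈ U) :
    |bpQuotient f' x u t - bpQuotient f' x v t| ≤ 2 * K * ‖u - v‖ := by
  have h := hK.norm_apply_sub_apply_le hx hx0 hut hvt u v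
  rw [add_sub_add_left_eq_sub, ← smul_sub, add_sub_cancel_left, norm_smul, norm_smul,
    Real.norm_of_nonneg ht.le, hu, hv, Real.norm_eq_abs] at h
  simp only [bpQuotient, hx0, zero_apply, sub_zero]
  rw [← sub_div, abs_div, abs_of_pos ht, div_le_iff₀ ht]
  linarith

theorem eventually_half_le_bpQuotient_near {K : NNReal} (hK : LipschitzOnWith K f' U)
    (hU : U ∈ 𝓝 x) (hx0 : f' x = 0) {u : E} (hu : ‖u‖ = 1) {ε : ℝ} (hε : 0 < ε)
    (hev : ∀ᶠ t in 𝓝[>] 0, ε < bpQuotient f' x u t) :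
    ∃ V ∈ 𝓝[sphere 0 1] u, ∀ᶠ t in 𝓝[>] 0, ∀ v ∈ V, ε / 2 ≤ bpQuotient f' x v t := by
  obtain ⟨r, hr, hrU⟩ := Metric.mem_nhds_iff.mp hU
  refine ⟨sphere 0 1 ∩ ball u (ε / (4 * K + 1)),
    inter_mem_nhdsWithin _ (ball_mem_nhds u (by positivity)), ?_⟩
  filter_upwards [hev, Ioo_mem_nhdsGT hr] with t hεt ⟨ht0, htr⟩ v ⟨hv, hvu⟩
  rw [mem_sphere_zero_iff_norm] at hv
  rw [mem_ball_iff_norm'] at hvu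
  have hray : ∀ w : E, ‖w‖ = 1 → x + t • w ∈ U := fun w hw =>
    hrU (by rwa [mem_ball_iff_norm, add_sub_cancel_left, norm_smul, hw, mul_one,
      Real.norm_of_nonneg ht0.le])
  have hclose := abs_bpQuotient_sub_le hK (mem_of_mem_nhds hU) hx0 hu hv ht0 (hray u hu)
    (hray v hv)
  have hKρ : 2 * K * ‖u - v‖ ≤ ε / 2 := by
    rw [lt_div_iff₀ (by positivity)] at hvu
    nlinarith [K.coe_nonneg, norm_nonneg (u - v)]
  linarith [(abs_le.mp hclose).2]

theorem exists_pos_eventually_bpQuotient_ge [FiniteDimensional ℝ E] {K : NNReal}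
    (hK : LipschitzOnWith K f' U) (hU : U ∈ 𝓝 x) (hx0 : f' x = 0)
    (hBP : ∀ u : E, u ≠ 0 → 0 < liminf (fun t => (bpQuotient f' x u t : EReal)) (𝓝[>] 0)) :
    ∃ m > 0, ∀ᶠ t in 𝓝[>] 0, ∀ v ∈ sphere (0 : E) 1, m ≤ bpQuotient f' x v t := by
  refine (isCompact_sphere 0 1).exists_pos_eventually_forall_le fun u hu => ?_
  rw [mem_sphere_zero_iff_norm] at hu
  obtain ⟨ε, hε, hev⟩ :=
    exists_pos_eventually_lt_of_pos_liminf (hBP u (norm_ne_zero_iff.mp (by simp [hu])))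
  obtain ⟨V, hV, hVev⟩ := eventually_half_le_bpQuotient_near hK hU hx0 hu hε hev
  exact ⟨V, hV, ε / 2, half_pos hε, hVev⟩

theorem add_half_mul_norm_sq_le {f : E → ℝ} {m δ : ℝ}
    (hdiff : ∀ y ∈ ball x δ, HasFDerivAt f (f' y) y) (hx0 : f' x = 0)
    (hm : ∀ v ∈ sphere (0 : E) 1, ∀ t ∈ Ioo 0 δ, m ≤ bpQuotient f' x v t) {y : E}
    (hy : y ∈ ball x δ) : f x + m / 2 * ‖y - x‖ ^ 2 ≤ f y := by
  rcases eq_or_ne y x with rfl | hyx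
  · simp
  set s := ‖y - x‖
  have hs : 0 < s := norm_pos_iff.mpr (sub_ne_zero_of_ne hyx)
  have hsδ : s < δ := mem_ball_iff_norm.mp hy
  set v := s⁻¹ • (y - x)
  have hv : ‖v‖ = 1 := norm_smul_inv_norm (sub_ne_zero_of_ne hyx)
  have hyv : x + s • v = y := by
    rw [smul_inv_smul₀ hs.ne', add_sub_cancel]
  have hray : ∀ t ∈ Icc 0 s,
      HasDerivAt (fun t : ℝ => f (x + t • v)) (f' (x + t • v) v) t := by
    intro t ht
    have hmem : x + t • v ∈ ball x δ := by
      rw [mem_ball_iff_norm, add_sub_cancel_left, norm_smul, hv, mul_one,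
        Real.norm_of_nonneg ht.1]
      exact ht.2.trans_lt hsδ
    exact (hdiff _ hmem).comp_hasDerivAt t
      ((((hasDerivAt_id t).smul_const v).const_add x).congr_deriv (one_smul ℝ v))
  have hslope : ∀ t ∈ Ioo 0 s, m * t ≤ f' (x + t • v) v := fun t ht => by
    have := hm v (mem_sphere_zero_iff_norm.mpr hv) t ⟨ht.1, ht.2.trans hsδ⟩
    rwa [bpQuotient, hx0, zero_apply, sub_zero, le_div_iff₀ ht.1] at this
  simpa [hyv] using add_half_mul_sq_le_of_hasDerivAt hs.le hray hslope

end BednarikPastor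

/-- Let `f : E → ℝ` be of class `C^{1,1}` on a neighborhood `U` of `x`
(Fréchet differentiable on `U` with Lipschitz derivative `f'`). If `∇f(x) = 0` and the
Bednařík–Pastor derivative satisfies
`f''_{BP}(x;u,u) = liminf_{t↓0} (∇f(x+tu)(u) − ∇f(x)(u))/t > 0` for every `u ≠ 0`, then
`f` attains a strict local minimum at `x`; in fact `x` is an isolated local minimizer of
second order. -/
theorem bp_sufficient_conditions
    {E : Type*} [NormedAddCommGroup E] [InnerProductSpace ℝ E] [FiniteDimensional ℝ E]
    (f : E → ℝ) (x : E) (f' : E → E →L[ℝ] ℝ)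
    (U : Set E) (hU : U ∈ 𝓝 x)
    (hdiff : ∀ y ∈ U, HasFDerivAt f (f' y) y)
    (hlip : ∃ K : NNReal, LipschitzOnWith K f' U)
    (hcrit : f' x = 0)
    (hBP : ∀ u : E, u ≠ 0 →
      0 < Filter.liminf
        (fun t : ℝ => (((f' (x + t • u)) u - (f' x) u) / t : ℝ) : ℝ → EReal)
        (𝓝[>] (0 : ℝ))) :
    (∃ N ∈ 𝓝 x, ∀ y ∈ N, y ≠ x → f x < f y) ∧
      ∃ C : ℝ, 0 < C ∧ ∃ N ∈ 𝓝 x, ∀ y ∈ N, y ≠ x → f x + C * ‖y - x‖ ^ 2 < f y := by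
  obtain ⟨K, hK⟩ := hlip
  obtain ⟨m, hm, hev⟩ := exists_pos_eventually_bpQuotient_ge hK hU hcrit hBP
  obtain ⟨δ, hδ, hδm⟩ := mem_nhdsGT_iff_exists_Ioo_subset.mp hev
  obtain ⟨r, hr, hrU⟩ := Metric.mem_nhds_iff.mp hU
  have hgrowth : ∀ y ∈ ball x (min δ r), f x + m / 2 * ‖y - x‖ ^ 2 ≤ f y :=
    fun y => add_half_mul_norm_sq_le
      (fun z hz => hdiff z (hrU (ball_subset_ball (min_le_right δ r) hz))) hcrit
      (fun v hv t ht => hδm ⟨ht.1, ht.2.trans_le (min_le_left δ r)⟩ v hv)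
  have hN : ball x (min δ r) ∈ 𝓝 x := ball_mem_nhds x (lt_min hδ hr)
  have hpos : ∀ y, y ≠ x → 0 < ‖y - x‖ ^ 2 := fun y hyx =>
    pow_pos (norm_pos_iff.mpr (sub_ne_zero_of_ne hyx)) 2
  refine ⟨⟨_, hN, fun y hy hyx => ?_⟩, m / 4, by positivity, _, hN, fun y hy hyx => ?_⟩ <;>
    nlinarith [hgrowth y hy, hpos y hyx]
end

section
/- Let f be a C^{1,1} function on an open set X ⊆ ℝⁿ (continuously differentiable with locally Lipschitz gradient) and let x₀ ∈ X be a local minimizer of f over X. Then for every direction d ∈ ℝⁿ, limsup_{t↓0} (∇f(x₀+td)(d) − ∇f(x₀)(d))/t ≥ 0. -/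
/-!
At a local minimizer the derivative vanishes, so the difference quotient is
`∇f(x₀ + t d)(d) / t`, and it suffices that `∇f(x₀ + t d)(d) ≥ 0` for arbitrarily small `t > 0`.
This numerator is the derivative of `g t = f (x₀ + t d)`, which has a local minimum at `0` on
`[0, ∞)`; if that derivative were negative on some `(0, ε)`, then `g` would strictly decrease
on `[0, ε)`, contradicting minimality.
-/

open Filter Topology Set

theorem frequently_nonneg_deriv_of_isLocalMinOn_Ici {g g' : ℝ → ℝ} {a : ℝ}
    (hmin : IsLocalMinOn g (Ici a) a) (hg : ∀ᶠ t in 𝓝[≥] a, HasDerivAt g (g' t) t) :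
    ∃ᶠ t in 𝓝[>] a, 0 ≤ g' t := by
  by_contra hfreq
  simp only [not_frequently, not_le] at hfreq
  obtain ⟨b, hab, hsub⟩ := mem_nhdsGE_iff_exists_Ico_subset.mp (hmin.and hg)
  obtain ⟨c, hac, hneg⟩ := mem_nhdsGT_iff_exists_Ioo_subset.mp hfreq
  set u := min b c
  have hau : a < u := lt_min hab hac
  have hanti : StrictAntiOn g (Ico a u) := by
    refine strictAntiOn_of_deriv_neg (convex_Ico a u) (fun t ht => ?_) fun t ht => ?_
    · exact (hsub ⟨ht.1, ht.2.trans_le (min_le_left _ _)⟩).2.continuousAt.continuousWithinAt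
    · rw [interior_Ico] at ht
      rw [(hsub ⟨ht.1.le, ht.2.trans_le (min_le_left _ _)⟩).2.deriv]
      exact hneg ⟨ht.1, ht.2.trans_le (min_le_right _ _)⟩
  have hmid : (a + u) / 2 ∈ Ico a u := ⟨by linarith, by linarith⟩
  have hdrop : g ((a + u) / 2) < g a := hanti (left_mem_Ico.mpr hau) hmid (by linarith)
  exact hdrop.not_ge (hsub ⟨hmid.1, hmid.2.trans_le (min_le_left _ _)⟩).1

theorem eventually_add_smul_mem_nhds {E : Type*} [NormedAddCommGroup E] [NormedSpace ℝ E]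
    {x : E} {N : Set E} (hN : N ∈ 𝓝 x) (d : E) : ∀ᶠ t in 𝓝 (0 : ℝ), x + t • d ∈ N := by
  have hline : Tendsto (fun t : ℝ => x + t • d) (𝓝 0) (𝓝 x) := by
    simpa using ((continuous_id.smul continuous_const).const_add x).tendsto (0 : ℝ)
  exact hline hN

theorem c11_local_min_second_order_necessary_general (n : ℕ)
    (X : Set (EuclideanSpace ℝ (Fin n)))
    (f : EuclideanSpace ℝ (Fin n) → ℝ)
    (f' : EuclideanSpace ℝ (Fin n) → EuclideanSpace ℝ (Fin n) →L[ℝ] ℝ)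
    (hdiff : ∀ y ∈ X, HasFDerivAt f (f' y) y)
    (x₀ : EuclideanSpace ℝ (Fin n))
    (hmin : ∃ N ∈ 𝓝 x₀, N ⊆ X ∧ ∀ x ∈ N, f x₀ ≤ f x) :
    ∀ d : EuclideanSpace ℝ (Fin n),
      0 ≤ Filter.limsup
        (fun t : ℝ => (((f' (x₀ + t • d)) d - (f' x₀) d) / t : ℝ) : ℝ → EReal)
        (𝓝[>] (0 : ℝ)) := by
  intro d
  obtain ⟨N, hN, hNX, hNmin⟩ := hmin
  have hcrit : f' x₀ = 0 :=
    IsLocalMin.hasFDerivAt_eq_zero (eventually_of_mem hN hNmin)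
      (hdiff x₀ (hNX (mem_of_mem_nhds hN)))
  have hline : ∀ᶠ t in 𝓝[≥] (0 : ℝ), x₀ + t • d ∈ N :=
    nhdsWithin_le_nhds (eventually_add_smul_mem_nhds hN d)
  have hslope : ∃ᶠ t in 𝓝[>] (0 : ℝ), 0 ≤ f' (x₀ + t • d) d := by
    refine frequently_nonneg_deriv_of_isLocalMinOn_Ici (g := fun t => f (x₀ + t • d)) ?_ ?_
    · filter_upwards [hline] with t ht
      simpa using hNmin _ ht
    · filter_upwards [hline] with t ht
      have hmove : HasDerivAt (fun s : ℝ => x₀ + s • d) d t := by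
        simpa using ((hasDerivAt_id t).smul_const d).const_add x₀
      exact (hdiff _ (hNX ht)).comp_hasDerivAt t hmove
  refine le_limsup_of_frequently_le' ((hslope.and_eventually self_mem_nhdsWithin).mono ?_)
  rintro t ⟨hnonneg, ht⟩
  rw [hcrit, zero_apply, sub_zero]
  exact EReal.coe_nonneg.mpr (div_nonneg hnonneg (le_of_lt ht))

/-- Let `f` be a `C^{1,1}` function on an open set `X ⊆ ℝⁿ` (Fréchet
differentiable on `X` with locally Lipschitz derivative `f'`) and let `x₀ ∈ X` be a local
minimizer of `f` over `X`. Then for every direction `d`,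
`limsup_{t↓0} (∇f(x₀+td)(d) − ∇f(x₀)(d))/t ≥ 0`. -/
theorem c11_local_min_second_order_necessary (n : ℕ)
    (X : Set (EuclideanSpace ℝ (Fin n))) (hX : IsOpen X)
    (f : EuclideanSpace ℝ (Fin n) → ℝ)
    (f' : EuclideanSpace ℝ (Fin n) → EuclideanSpace ℝ (Fin n) →L[ℝ] ℝ)
    (hdiff : ∀ y ∈ X, HasFDerivAt f (f' y) y)
    (hlip : ∀ y ∈ X, ∃ U ∈ 𝓝 y, ∃ K : NNReal, LipschitzOnWith K f' (U ∩ X))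
    (x₀ : EuclideanSpace ℝ (Fin n)) (hx₀ : x₀ ∈ X)
    (hmin : ∃ N ∈ 𝓝 x₀, N ⊆ X ∧ ∀ x ∈ N, f x₀ ≤ f x) :
    ∀ d : EuclideanSpace ℝ (Fin n),
      0 ≤ Filter.limsup
        (fun t : ℝ => (((f' (x₀ + t • d)) d - (f' x₀) d) / t : ℝ) : ℝ → EReal)
        (𝓝[>] (0 : ℝ)) :=
  c11_local_min_second_order_necessary_general n X f f' hdiff x₀ hmin
end
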